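/- arXiv:2505.08057 — 5 statements merged into one kernel-verified Lean document; each statement's English description precedes it below -/
import Mathlib

section
/- Let N be a positive integer, R > 0, let B_R be the open Euclidean ball of radius R in ℝᴺ centered at the origin, let a₁, α₁, a₂, α₂, σ₁, σ₂ > 0, and let f₁, f₂ : ℝᴺ → ℝ. Let z₁, z₂ : ℝᴺ → ℝ be twice continuously differentiable on B_R and set u₁(x) = exp(−z₁(x)/(2σ₁²)) and u₂(x) = exp(−z₂(x)/(2σ₂²)). Then (z₁, z₂) satisfies, for all x ∈ B_R, the system −a₁z₂(x) + (a₁+α₁)z₁(x) − (σ₁²/2)Δz₁(x) − f₁(x) = −(1/4)‖∇z₁(x)‖² and −a₂z₁(x) + (a₂+α₂)z₂(x) − (σ₂²/2)Δz₂(x) − f₂(x) = −(1/4)‖∇z₂(x)‖², if and only if (u₁, u₂) satisfies, for all x ∈ B_R, Δu₁(x) = u₁(x)[f₁(x)/σ₁⁴ + (2(a₁+α₁)/σ₁²)ln u₁(x) − (2a₁σ₂²/σ₁⁴)ln u₂(x)] and Δu₂(x) = u₂(x)[f₂(x)/σ₂⁴ + (2(a₂+α₂)/σ₂²)ln u₂(x)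 − (2a₂σ₁²/σ₂⁴)ln u₁(x)]. Moreover, z₁(x) = z₂(x) = 0 if and only if u₁(x) = u₂(x) = 1. -/
open Metric

/-- The Laplacian of `f : ℝᴺ → ℝ`: the sum of the second-order partial derivatives. -/
noncomputable def laplacian {N : ℕ} (f : EuclideanSpace ℝ (Fin N) → ℝ)
    (x : EuclideanSpace ℝ (Fin N)) : ℝ :=
  ∑ i : Fin N,
    fderiv ℝ (fun y => fderiv ℝ f y (EuclideanSpace.single i 1)) x (EuclideanSpace.single i 1)

lemma grad_sq_eq {N : ℕ} (z : EuclideanSpace ℝ (Fin N) → ℝ) (x : EuclideanSpace ℝ (Fin N)) :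
    ‖gradient z x‖ ^ 2 = ∑ i : Fin N, (fderiv ℝ z x (EuclideanSpace.single i 1)) ^ 2 := by
  have hcoord : ∀ i : Fin N, gradient z x i = fderiv ℝ z x (EuclideanSpace.single i 1) := by
    intro i
    have h1 : (inner ℝ (gradient z x) (EuclideanSpace.single i (1:ℝ)) : ℝ)
        = fderiv ℝ z x (EuclideanSpace.single i 1) := by
      rw [gradient, InnerProductSpace.toDual_symm_apply]
    rw [EuclideanSpace.inner_single_right] at h1
    simpa using h1
  rw [← real_inner_self_eq_norm_sq, PiLp.inner_apply]
  refine Finset.sum_congr rfl fun i _ => ?_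
  rw [RCLike.inner_apply, hcoord i]
  simp; ring

lemma hasFDerivAt_exp_comp {N : ℕ} {s : Set (EuclideanSpace ℝ (Fin N))}
    {z : EuclideanSpace ℝ (Fin N) → ℝ}
    (hz : ∀ y ∈ s, DifferentiableAt ℝ z y) (c : ℝ) {y : EuclideanSpace ℝ (Fin N)} (hy : y ∈ s) :
    HasFDerivAt (fun w => Real.exp (c * z w)) (Real.exp (c * z y) • (c • fderiv ℝ z y)) y :=
  ((hz y hy).hasFDerivAt.const_mul c).exp

lemma lap_exp {N : ℕ} {s : Set (EuclideanSpace ℝ (Fin N))} (hs : IsOpen s)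
    {z : EuclideanSpace ℝ (Fin N) → ℝ} (hz : ContDiffOn ℝ 2 z s)
    (c : ℝ) {x : EuclideanSpace ℝ (Fin N)} (hx : x ∈ s) :
    laplacian (fun w => Real.exp (c * z w)) x
      = Real.exp (c * z x) * (c * laplacian z x + c ^ 2 * ‖gradient z x‖ ^ 2) := by
  have hzd : ∀ y ∈ s, DifferentiableAt ℝ z y := fun y hy =>
    (hz.contDiffAt (hs.mem_nhds hy)).differentiableAt two_ne_zero
  have hd2 : ∀ v : EuclideanSpace ℝ (Fin N), DifferentiableAt ℝ (fun y => fderiv ℝ z y v) x := by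
    intro v
    have h1 : ContDiffAt ℝ 1 (fderiv ℝ z) x :=
      (hz.contDiffAt (hs.mem_nhds hx)).fderiv_right (le_refl 2)
    exact (h1.differentiableAt one_ne_zero).clm_apply (differentiableAt_const v)
  have key : ∀ v : EuclideanSpace ℝ (Fin N),
      fderiv ℝ (fun y => fderiv ℝ (fun w => Real.exp (c * z w)) y v) x v
        = Real.exp (c * z x) * (c * fderiv ℝ (fun y => fderiv ℝ z y v) x v)
            + Real.exp (c * z x) * (c ^ 2 * (fderiv ℝ z x v) ^ 2) := by
    intro v
    have hEq : (fun y => fderiv ℝ (fun w => Real.exp (c * z w)) y v)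
        =ᶠ[nhds x] fun y => Real.exp (c * z y) * (c * fderiv ℝ z y v) := by
      filter_upwards [hs.mem_nhds hx] with y hy
      rw [(hasFDerivAt_exp_comp hzd c hy).fderiv]
      simp
    rw [hEq.fderiv_eq]
    have hA : HasFDerivAt (fun y => Real.exp (c * z y))
        (Real.exp (c * z x) • (c • fderiv ℝ z x)) x := hasFDerivAt_exp_comp hzd c hx
    have hB : HasFDerivAt (fun y => c * fderiv ℝ z y v)
        (c • fderiv ℝ (fun y => fderiv ℝ z y v) x) x := (hd2 v).hasFDerivAt.const_mul c
    rw [(show HasFDerivAt (fun y => Real.exp (c * z y) * (c * fderiv ℝ z y v)) _ x from hA.mul hB).fderiv]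
    simp [ContinuousLinearMap.add_apply, ContinuousLinearMap.smul_apply]
    ring
  rw [laplacian, grad_sq_eq]
  rw [Finset.sum_congr rfl fun i (_ : i ∈ Finset.univ) => key (EuclideanSpace.single i 1)]
  rw [Finset.sum_add_distrib, ← Finset.mul_sum, ← Finset.mul_sum, ← Finset.mul_sum, laplacian]
  rw [← Finset.mul_sum]
  ring

lemma hjb_alg (a α σa σb f zx zy L G : ℝ) (ha : σa ≠ 0) (hb : σb ≠ 0) :
    (-a * zy + (a + α) * zx - σa ^ 2 / 2 * L - f = -(1/4) * G)
      ↔ (-(1/(2*σa^2)) * L + (-(1/(2*σa^2)))^2 * G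
          = f / σa ^ 4 + 2 * (a + α) / σa ^ 2 * (-(1/(2*σa^2)) * zx)
            - 2 * a * σb ^ 2 / σa ^ 4 * (-(1/(2*σb^2)) * zy)) := by
  have hc : (32:ℝ) * σa ^ 14 * σb ^ 2 ≠ 0 :=
    mul_ne_zero (mul_ne_zero (by norm_num) (pow_ne_zero _ ha)) (pow_ne_zero _ hb)
  constructor
  · intro h
    field_simp
    linear_combination 4 * h
  · intro h
    field_simp at h
    have h2 : (32:ℝ) * σa ^ 14 * σb ^ 2 * (-a * zy + (a + α) * zx - σa ^ 2 / 2 * L - f)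
        = 32 * σa ^ 14 * σb ^ 2 * (-(1/4) * G) := by linear_combination (8 * σa ^ 14 * σb ^ 2) * h
    exact mul_left_cancel₀ hc h2

/-- The logarithmic transformation `u_j = exp(−z_j/(2σ_j²))` converts the HJB system into the
semilinear elliptic system without gradient terms, and maps the zero boundary condition to
the boundary value 1. -/
theorem hjb_log_transform (N : ℕ) (hN : 0 < N) (R : ℝ) (hR : 0 < R)
    (a₁ α₁ a₂ α₂ σ₁ σ₂ : ℝ)
    (ha₁ : 0 < a₁) (hα₁ : 0 < α₁) (ha₂ : 0 < a₂) (hα₂ : 0 < α₂)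
    (hσ₁ : 0 < σ₁) (hσ₂ : 0 < σ₂)
    (f₁ f₂ : EuclideanSpace ℝ (Fin N) → ℝ)
    (z₁ z₂ : EuclideanSpace ℝ (Fin N) → ℝ)
    (hz₁ : ContDiffOn ℝ 2 z₁ (ball (0 : EuclideanSpace ℝ (Fin N)) R))
    (hz₂ : ContDiffOn ℝ 2 z₂ (ball (0 : EuclideanSpace ℝ (Fin N)) R))
    (u₁ u₂ : EuclideanSpace ℝ (Fin N) → ℝ)
    (hu₁ : u₁ = fun x => Real.exp (-z₁ x / (2 * σ₁ ^ 2)))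
    (hu₂ : u₂ = fun x => Real.exp (-z₂ x / (2 * σ₂ ^ 2))) :
    ((∀ x ∈ ball (0 : EuclideanSpace ℝ (Fin N)) R,
        -a₁ * z₂ x + (a₁ + α₁) * z₁ x - σ₁ ^ 2 / 2 * laplacian z₁ x - f₁ x
          = -(1 / 4) * ‖gradient z₁ x‖ ^ 2 ∧
        -a₂ * z₁ x + (a₂ + α₂) * z₂ x - σ₂ ^ 2 / 2 * laplacian z₂ x - f₂ x
          = -(1 / 4) * ‖gradient z₂ x‖ ^ 2) ↔
      (∀ x ∈ ball (0 : EuclideanSpace ℝ (Fin N)) R,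
        laplacian u₁ x = u₁ x * (f₁ x / σ₁ ^ 4 + 2 * (a₁ + α₁) / σ₁ ^ 2 * Real.log (u₁ x)
          - 2 * a₁ * σ₂ ^ 2 / σ₁ ^ 4 * Real.log (u₂ x)) ∧
        laplacian u₂ x = u₂ x * (f₂ x / σ₂ ^ 4 + 2 * (a₂ + α₂) / σ₂ ^ 2 * Real.log (u₂ x)
          - 2 * a₂ * σ₁ ^ 2 / σ₂ ^ 4 * Real.log (u₁ x)))) ∧
    (∀ x, (z₁ x = 0 ∧ z₂ x = 0) ↔ (u₁ x = 1 ∧ u₂ x = 1)) := by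
  have hσ₁' : σ₁ ≠ 0 := ne_of_gt hσ₁
  have hσ₂' : σ₂ ≠ 0 := ne_of_gt hσ₂
  have hu₁' : u₁ = fun y => Real.exp (-(1/(2*σ₁^2)) * z₁ y) := by
    rw [hu₁]; funext y; congr 1; ring
  have hu₂' : u₂ = fun y => Real.exp (-(1/(2*σ₂^2)) * z₂ y) := by
    rw [hu₂]; funext y; congr 1; ring
  constructor
  · have hlap₁ : ∀ x ∈ ball (0 : EuclideanSpace ℝ (Fin N)) R,
        laplacian u₁ x = Real.exp (-(1/(2*σ₁^2)) * z₁ x) *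
          (-(1/(2*σ₁^2)) * laplacian z₁ x + (-(1/(2*σ₁^2)))^2 * ‖gradient z₁ x‖^2) := by
      intro x hx; rw [hu₁']; exact lap_exp isOpen_ball hz₁ _ hx
    have hlap₂ : ∀ x ∈ ball (0 : EuclideanSpace ℝ (Fin N)) R,
        laplacian u₂ x = Real.exp (-(1/(2*σ₂^2)) * z₂ x) *
          (-(1/(2*σ₂^2)) * laplacian z₂ x + (-(1/(2*σ₂^2)))^2 * ‖gradient z₂ x‖^2) := by
      intro x hx; rw [hu₂']; exact lap_exp isOpen_ball hz₂ _ hx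
    have hpt : ∀ x ∈ ball (0 : EuclideanSpace ℝ (Fin N)) R,
        ((-a₁ * z₂ x + (a₁ + α₁) * z₁ x - σ₁ ^ 2 / 2 * laplacian z₁ x - f₁ x
            = -(1 / 4) * ‖gradient z₁ x‖ ^ 2 ∧
          -a₂ * z₁ x + (a₂ + α₂) * z₂ x - σ₂ ^ 2 / 2 * laplacian z₂ x - f₂ x
            = -(1 / 4) * ‖gradient z₂ x‖ ^ 2) ↔
        (laplacian u₁ x = u₁ x * (f₁ x / σ₁ ^ 4 + 2 * (a₁ + α₁) / σ₁ ^ 2 * Real.log (u₁ x)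
            - 2 * a₁ * σ₂ ^ 2 / σ₁ ^ 4 * Real.log (u₂ x)) ∧
          laplacian u₂ x = u₂ x * (f₂ x / σ₂ ^ 4 + 2 * (a₂ + α₂) / σ₂ ^ 2 * Real.log (u₂ x)
            - 2 * a₂ * σ₁ ^ 2 / σ₂ ^ 4 * Real.log (u₁ x)))) := by
      intro x hx
      rw [hlap₁ x hx, hlap₂ x hx]
      simp only [hu₁', hu₂', Real.log_exp]
      rw [mul_right_inj' (Real.exp_ne_zero _), mul_right_inj' (Real.exp_ne_zero _)]
      exact and_congr
        (hjb_alg a₁ α₁ σ₁ σ₂ (f₁ x) (z₁ x) (z₂ x) (laplacian z₁ x) (‖gradient z₁ x‖ ^ 2)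
          hσ₁' hσ₂')
        (hjb_alg a₂ α₂ σ₂ σ₁ (f₂ x) (z₂ x) (z₁ x) (laplacian z₂ x) (‖gradient z₂ x‖ ^ 2)
          hσ₂' hσ₁')
    exact ⟨fun h x hx => (hpt x hx).mp (h x hx), fun h x hx => (hpt x hx).mpr (h x hx)⟩
  · intro x
    have h2σ₁ : (2:ℝ) * σ₁ ^ 2 ≠ 0 := mul_ne_zero two_ne_zero (pow_ne_zero _ hσ₁')
    have h2σ₂ : (2:ℝ) * σ₂ ^ 2 ≠ 0 := mul_ne_zero two_ne_zero (pow_ne_zero _ hσ₂')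
    simp only [hu₁, hu₂, Real.exp_eq_one_iff, div_eq_zero_iff, neg_eq_zero, h2σ₁, h2σ₂, or_false]
end

section
/- Let N be a positive integer, R > 0, and a₁, α₁, a₂, α₂, σ₁, σ₂, M₁, M₂ > 0. Suppose K₁, K₂ < 0 satisfy: 4K₁² + (2(a₁+α₁)σ₁²/σ₁⁴)K₁ − M₁/σ₁⁴ − (2a₁σ₂²/σ₁⁴)K₂ = 0; 4K₂² + (2(a₂+α₂)σ₂²/σ₂⁴)K₂ − M₂/σ₂⁴ − (2a₂σ₁²/σ₂⁴)K₁ = 0; −(2(a₁+α₁)R²/σ₁²)K₁ − 2K₁N + (2a₁σ₂²R²/σ₁⁴)K₂ ≥ 0; and −(2(a₂+α₂)R²/σ₂²)K₂ − 2NK₂ + (2a₂σ₁²R²/σ₂⁴)K₁ ≥ 0. Let f₁, f₂ : ℝᴺ → ℝ satisfy f₁(x) ≤ M₁‖x‖² and f₂(x) ≤ M₂‖x‖² for all x in the open ball B_R of radius R. Then the functions u̲₁(x) = exp(K₁(R² − ‖x‖²)) and u̲₂(x) = exp(K₂(R² − ‖x‖²)) satisfy, for all x ∈ B_R, the differential inequalities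 Δu̲₁(x) ≥ u̲₁(x)[f₁(x)/σ₁⁴ + (2(a₁+α₁)/σ₁²)ln u̲₁(x) − (2a₁σ₂²/σ₁⁴)ln u̲₂(x)] and Δu̲₂(x) ≥ u̲₂(x)[f₂(x)/σ₂⁴ + (2(a₂+α₂)/σ₂²)ln u̲₂(x) − (2a₂σ₁²/σ₂⁴)ln u̲₁(x)], together with u̲₁(x) = u̲₂(x) = 1 for ‖x‖ = R. -/
open Metric

lemma hderiv {N : ℕ} (K c : ℝ) (y : EuclideanSpace ℝ (Fin N)) :
    HasFDerivAt (fun z : EuclideanSpace ℝ (Fin N) => Real.exp (K * (c - ‖z‖ ^ 2)))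
      ((Real.exp (K * (c - ‖y‖ ^ 2)) * (-2 * K)) • (innerSL ℝ y)) y := by
  have h1 : HasFDerivAt (fun z : EuclideanSpace ℝ (Fin N) => ‖z‖ ^ 2)
      (2 • (innerSL ℝ y)) y := by
    simpa using (hasFDerivAt_id y).norm_sq
  have h2 := ((h1.const_sub c).const_mul K).exp
  refine h2.congr_fderiv ?_
  ext v
  simp [mul_comm, mul_assoc, mul_left_comm]

lemma lap_exp_s4 {N : ℕ} (K c : ℝ) (x : EuclideanSpace ℝ (Fin N)) :
    laplacian (fun y => Real.exp (K * (c - ‖y‖ ^ 2))) x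
      = (4 * K ^ 2 * ‖x‖ ^ 2 - 2 * K * (N : ℝ)) * Real.exp (K * (c - ‖x‖ ^ 2)) := by
  have hfd : ∀ y : EuclideanSpace ℝ (Fin N), ∀ i : Fin N,
      fderiv ℝ (fun z : EuclideanSpace ℝ (Fin N) => Real.exp (K * (c - ‖z‖ ^ 2))) y
        (EuclideanSpace.single i 1)
      = (-2 * K) * (y i * Real.exp (K * (c - ‖y‖ ^ 2))) := by
    intro y i
    rw [(hderiv K c y).fderiv]
    simp [real_inner_comm, EuclideanSpace.inner_single_left, EuclideanSpace.inner_single_right]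
    ring
  unfold laplacian
  have key : ∀ i : Fin N,
      fderiv ℝ (fun y => fderiv ℝ (fun z : EuclideanSpace ℝ (Fin N) =>
          Real.exp (K * (c - ‖z‖ ^ 2))) y (EuclideanSpace.single i 1)) x
        (EuclideanSpace.single i 1)
      = (-2 * K) * Real.exp (K * (c - ‖x‖ ^ 2))
        + 4 * K ^ 2 * (x i) ^ 2 * Real.exp (K * (c - ‖x‖ ^ 2)) := by
    intro i
    have hcongr : (fun y : EuclideanSpace ℝ (Fin N) =>
        fderiv ℝ (fun z : EuclideanSpace ℝ (Fin N) => Real.exp (K * (c - ‖z‖ ^ 2))) y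
          (EuclideanSpace.single i 1))
      = fun y => (-2 * K) * (y i * Real.exp (K * (c - ‖y‖ ^ 2))) := by
      funext y; exact hfd y i
    rw [hcongr]
    have hproj : HasFDerivAt (fun y : EuclideanSpace ℝ (Fin N) => y i)
        (EuclideanSpace.proj i : EuclideanSpace ℝ (Fin N) →L[ℝ] ℝ) x :=
      (EuclideanSpace.proj i : EuclideanSpace ℝ (Fin N) →L[ℝ] ℝ).hasFDerivAt
    have hmul := (show HasFDerivAt
      (fun y : EuclideanSpace ℝ (Fin N) => (-2 * K) * (y i * Real.exp (K * (c - ‖y‖ ^ 2)))) _ x from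
      ((hproj.mul (hderiv K c x)).const_mul (-2 * K))).fderiv
    rw [hmul]
    simp [real_inner_comm, EuclideanSpace.inner_single_left, EuclideanSpace.inner_single_right, EuclideanSpace.single_apply]
    ring
  rw [Finset.sum_congr rfl fun i _ => key i]
  rw [Finset.sum_add_distrib]
  have hnorm : ∑ i : Fin N, (x i) ^ 2 = ‖x‖ ^ 2 := by
    rw [EuclideanSpace.norm_eq, Real.sq_sqrt (Finset.sum_nonneg fun i _ => sq_nonneg _)]
    simp [sq]
  rw [Finset.sum_const, Finset.card_univ, Fintype.card_fin]
  have h4 : (∑ i : Fin N, 4 * K ^ 2 * x i ^ 2) = 4 * K ^ 2 * ‖x‖ ^ 2 := by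
    rw [← Finset.mul_sum, hnorm]
  rw [← Finset.sum_mul, h4, nsmul_eq_mul]
  push_cast
  ring

/-- Step 1 of the proof of the main theorem: the pair
`(exp(K₁(R²−‖x‖²)), exp(K₂(R²−‖x‖²)))` is a sub-solution of the transformed HJB system
with boundary value `1`. -/
theorem subsolution_construction (N : ℕ) (hN : 0 < N) (R : ℝ) (hR : 0 < R)
    (a₁ α₁ a₂ α₂ σ₁ σ₂ M₁ M₂ : ℝ)
    (ha₁ : 0 < a₁) (hα₁ : 0 < α₁) (ha₂ : 0 < a₂) (hα₂ : 0 < α₂)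
    (hσ₁ : 0 < σ₁) (hσ₂ : 0 < σ₂) (hM₁ : 0 < M₁) (hM₂ : 0 < M₂)
    (K₁ K₂ : ℝ) (hK₁ : K₁ < 0) (hK₂ : K₂ < 0)
    (heq₁ : 4 * K₁ ^ 2 + (2 * (a₁ + α₁) * σ₁ ^ 2 / σ₁ ^ 4) * K₁
      - M₁ / σ₁ ^ 4 - (2 * a₁ * σ₂ ^ 2 / σ₁ ^ 4) * K₂ = 0)
    (heq₂ : 4 * K₂ ^ 2 + (2 * (a₂ + α₂) * σ₂ ^ 2 / σ₂ ^ 4) * K₂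
      - M₂ / σ₂ ^ 4 - (2 * a₂ * σ₁ ^ 2 / σ₂ ^ 4) * K₁ = 0)
    (hineq₁ : -(2 * (a₁ + α₁) * R ^ 2 / σ₁ ^ 2) * K₁ - 2 * K₁ * (N : ℝ)
      + (2 * a₁ * σ₂ ^ 2 * R ^ 2 / σ₁ ^ 4) * K₂ ≥ 0)
    (hineq₂ : -(2 * (a₂ + α₂) * R ^ 2 / σ₂ ^ 2) * K₂ - 2 * (N : ℝ) * K₂
      + (2 * a₂ * σ₁ ^ 2 * R ^ 2 / σ₂ ^ 4) * K₁ ≥ 0)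
    (f₁ f₂ : EuclideanSpace ℝ (Fin N) → ℝ)
    (hf₁ : ∀ x ∈ ball (0 : EuclideanSpace ℝ (Fin N)) R, f₁ x ≤ M₁ * ‖x‖ ^ 2)
    (hf₂ : ∀ x ∈ ball (0 : EuclideanSpace ℝ (Fin N)) R, f₂ x ≤ M₂ * ‖x‖ ^ 2)
    (u₁ u₂ : EuclideanSpace ℝ (Fin N) → ℝ)
    (hu₁ : u₁ = fun x => Real.exp (K₁ * (R ^ 2 - ‖x‖ ^ 2)))
    (hu₂ : u₂ = fun x => Real.exp (K₂ * (R ^ 2 - ‖x‖ ^ 2))) :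
    (∀ x ∈ ball (0 : EuclideanSpace ℝ (Fin N)) R,
      laplacian u₁ x ≥ u₁ x * (f₁ x / σ₁ ^ 4 + 2 * (a₁ + α₁) / σ₁ ^ 2 * Real.log (u₁ x)
        - 2 * a₁ * σ₂ ^ 2 / σ₁ ^ 4 * Real.log (u₂ x)) ∧
      laplacian u₂ x ≥ u₂ x * (f₂ x / σ₂ ^ 4 + 2 * (a₂ + α₂) / σ₂ ^ 2 * Real.log (u₂ x)
        - 2 * a₂ * σ₁ ^ 2 / σ₂ ^ 4 * Real.log (u₁ x))) ∧
    (∀ x : EuclideanSpace ℝ (Fin N), ‖x‖ = R → u₁ x = 1 ∧ u₂ x = 1) := by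
  subst hu₁ hu₂
  have h2 : (σ₁ : ℝ) ^ 2 ≠ 0 := by positivity
  have h4 : (σ₁ : ℝ) ^ 4 ≠ 0 := by positivity
  have g2 : (σ₂ : ℝ) ^ 2 ≠ 0 := by positivity
  have g4 : (σ₂ : ℝ) ^ 4 ≠ 0 := by positivity
  have hK₁' : 4 * K₁ ^ 2 = M₁ / σ₁ ^ 4 + (2 * a₁ * σ₂ ^ 2 / σ₁ ^ 4) * K₂
      - (2 * (a₁ + α₁) / σ₁ ^ 2) * K₁ := by
    have : 2 * (a₁ + α₁) * σ₁ ^ 2 / σ₁ ^ 4 = 2 * (a₁ + α₁) / σ₁ ^ 2 := by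
      field_simp
    linarith [heq₁, this ▸ heq₁]
  have hK₂' : 4 * K₂ ^ 2 = M₂ / σ₂ ^ 4 + (2 * a₂ * σ₁ ^ 2 / σ₂ ^ 4) * K₁
      - (2 * (a₂ + α₂) / σ₂ ^ 2) * K₂ := by
    have : 2 * (a₂ + α₂) * σ₂ ^ 2 / σ₂ ^ 4 = 2 * (a₂ + α₂) / σ₂ ^ 2 := by
      field_simp
    linarith [heq₂, this ▸ heq₂]
  constructor
  · intro x hx
    set t := ‖x‖ ^ 2 with ht
    have hE₁ : (0:ℝ) < Real.exp (K₁ * (R ^ 2 - t)) := Real.exp_pos _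
    have hE₂ : (0:ℝ) < Real.exp (K₂ * (R ^ 2 - t)) := Real.exp_pos _
    have hf₁x := hf₁ x hx
    have hf₂x := hf₂ x hx
    rw [← ht] at hf₁x hf₂x
    constructor
    · rw [lap_exp_s4, Real.log_exp, Real.log_exp]
      have hAB : f₁ x / σ₁ ^ 4 + 2 * (a₁ + α₁) / σ₁ ^ 2 * (K₁ * (R ^ 2 - t))
          - 2 * a₁ * σ₂ ^ 2 / σ₁ ^ 4 * (K₂ * (R ^ 2 - t))
          ≤ 4 * K₁ ^ 2 * t - 2 * K₁ * (N : ℝ) := by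
        have hkey : 4 * K₁ ^ 2 * t - 2 * K₁ * (N : ℝ)
            - (f₁ x / σ₁ ^ 4 + 2 * (a₁ + α₁) / σ₁ ^ 2 * (K₁ * (R ^ 2 - t))
              - 2 * a₁ * σ₂ ^ 2 / σ₁ ^ 4 * (K₂ * (R ^ 2 - t)))
            = (M₁ * t - f₁ x) / σ₁ ^ 4
              + (-(2 * (a₁ + α₁) * R ^ 2 / σ₁ ^ 2) * K₁ - 2 * K₁ * (N : ℝ)
                + (2 * a₁ * σ₂ ^ 2 * R ^ 2 / σ₁ ^ 4) * K₂) := by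
          linear_combination t * hK₁'
        have h₁ : (0:ℝ) ≤ (M₁ * t - f₁ x) / σ₁ ^ 4 :=
          div_nonneg (by linarith) (by positivity)
        linarith [hkey, h₁, hineq₁]
      calc Real.exp (K₁ * (R ^ 2 - t)) * (f₁ x / σ₁ ^ 4
            + 2 * (a₁ + α₁) / σ₁ ^ 2 * (K₁ * (R ^ 2 - t))
            - 2 * a₁ * σ₂ ^ 2 / σ₁ ^ 4 * (K₂ * (R ^ 2 - t)))
          ≤ Real.exp (K₁ * (R ^ 2 - t)) * (4 * K₁ ^ 2 * t - 2 * K₁ * (N : ℝ)) :=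
            mul_le_mul_of_nonneg_left hAB hE₁.le
        _ = (4 * K₁ ^ 2 * t - 2 * K₁ * (N : ℝ)) * Real.exp (K₁ * (R ^ 2 - t)) := mul_comm _ _
    · rw [lap_exp_s4, Real.log_exp, Real.log_exp]
      have hAB : f₂ x / σ₂ ^ 4 + 2 * (a₂ + α₂) / σ₂ ^ 2 * (K₂ * (R ^ 2 - t))
          - 2 * a₂ * σ₁ ^ 2 / σ₂ ^ 4 * (K₁ * (R ^ 2 - t))
          ≤ 4 * K₂ ^ 2 * t - 2 * K₂ * (N : ℝ) := by
        have hkey : 4 * K₂ ^ 2 * t - 2 * K₂ * (N : ℝ)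
            - (f₂ x / σ₂ ^ 4 + 2 * (a₂ + α₂) / σ₂ ^ 2 * (K₂ * (R ^ 2 - t))
              - 2 * a₂ * σ₁ ^ 2 / σ₂ ^ 4 * (K₁ * (R ^ 2 - t)))
            = (M₂ * t - f₂ x) / σ₂ ^ 4
              + (-(2 * (a₂ + α₂) * R ^ 2 / σ₂ ^ 2) * K₂ - 2 * (N : ℝ) * K₂
                + (2 * a₂ * σ₁ ^ 2 * R ^ 2 / σ₂ ^ 4) * K₁) := by
          linear_combination t * hK₂'
        have h₁ : (0:ℝ) ≤ (M₂ * t - f₂ x) / σ₂ ^ 4 :=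
          div_nonneg (by linarith) (by positivity)
        linarith [hkey, h₁, hineq₂]
      calc Real.exp (K₂ * (R ^ 2 - t)) * (f₂ x / σ₂ ^ 4
            + 2 * (a₂ + α₂) / σ₂ ^ 2 * (K₂ * (R ^ 2 - t))
            - 2 * a₂ * σ₁ ^ 2 / σ₂ ^ 4 * (K₁ * (R ^ 2 - t)))
          ≤ Real.exp (K₂ * (R ^ 2 - t)) * (4 * K₂ ^ 2 * t - 2 * K₂ * (N : ℝ)) :=
            mul_le_mul_of_nonneg_left hAB hE₂.le
        _ = (4 * K₂ ^ 2 * t - 2 * K₂ * (N : ℝ)) * Real.exp (K₂ * (R ^ 2 - t)) := mul_comm _ _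
  · intro x hx
    simp [hx]
end

section
/- Let N be a positive integer, R > 0, a₁, α₁, a₂, α₂, σ₁, σ₂ > 0, and let f₁, f₂ : ℝᴺ → ℝ be continuous. If (u₁, u₂) and (ũ₁, ũ₂) are two pairs of positive functions, each twice continuously differentiable on the open ball B_R ⊂ ℝᴺ and continuous on the closed ball, satisfying Δu₁(x) = u₁(x)[f₁(x)/σ₁⁴ + (2(a₁+α₁)/σ₁²)ln u₁(x) − (2a₁σ₂²/σ₁⁴)ln u₂(x)] and Δu₂(x) = u₂(x)[f₂(x)/σ₂⁴ + (2(a₂+α₂)/σ₂²)ln u₂(x) − (2a₂σ₁²/σ₂⁴)ln u₁(x)] for all x ∈ B_R, with boundary values u₁ = u₂ = 1 and ũ₁ = ũ₂ = 1 on ∂B_R, then u₁ = ũ₁ and u₂ = ũ₂ on the closed ball. -/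
open Metric

section Aux

/-- 1D second-derivative test at an interior local max. -/
lemma second_deriv_nonpos_of_isLocalMax {g : ℝ → ℝ} {c : ℝ}
    (hdiff : ∀ᶠ t in nhds (0 : ℝ), DifferentiableAt ℝ g t)
    (hmax : IsLocalMax g 0)
    (hc : HasDerivAt (deriv g) c 0) : c ≤ 0 := by
  by_contra hpos
  push_neg at hpos
  have h0 : deriv g 0 = 0 := hmax.deriv_eq_zero
  have hslope : Filter.Tendsto (slope (deriv g) 0) (nhdsWithin 0 {(0:ℝ)}ᶜ) (nhds c) :=
    hasDerivAt_iff_tendsto_slope.mp hc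
  have hev : ∀ᶠ t in nhdsWithin 0 {(0:ℝ)}ᶜ, 0 < slope (deriv g) 0 t :=
    hslope.eventually (eventually_gt_nhds hpos)
  rw [eventually_nhdsWithin_iff] at hev
  have hall : ∀ᶠ t in nhds (0:ℝ), DifferentiableAt ℝ g t ∧
      (t ∈ ({(0:ℝ)}ᶜ : Set ℝ) → 0 < slope (deriv g) 0 t) ∧ g t ≤ g 0 :=
    hdiff.and (hev.and hmax)
  obtain ⟨δ, hδpos, hδ⟩ := Metric.eventually_nhds_iff.mp hall
  have hmem : ∀ t : ℝ, 0 ≤ t → t ≤ δ/2 → dist t 0 < δ := by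
    intro t h1 h2
    rw [Real.dist_eq, sub_zero, abs_of_nonneg h1]
    linarith
  have hsm : StrictMonoOn g (Set.Icc 0 (δ/2)) := by
    apply strictMonoOn_of_deriv_pos (convex_Icc _ _)
    · intro t ht
      exact ((hδ (hmem t ht.1 ht.2)).1.continuousAt).continuousWithinAt
    · intro t ht
      rw [interior_Icc] at ht
      have hd := hδ (hmem t ht.1.le ht.2.le)
      have hs : 0 < slope (deriv g) 0 t := hd.2.1 (by simp [ht.1.ne'])
      rw [slope_def_field, h0, sub_zero, sub_zero] at hs
      have := mul_pos hs ht.1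
      rwa [div_mul_cancel₀ _ ht.1.ne'] at this
  have hlt : g 0 < g (δ/2) :=
    hsm (Set.left_mem_Icc.mpr (by linarith)) (Set.right_mem_Icc.mpr (by linarith))
      (by linarith)
  have hle : g (δ/2) ≤ g 0 :=
    (hδ (hmem (δ/2) (by linarith) le_rfl)).2.2
  linarith

variable {N : ℕ}

lemma diffAt_partial {f : EuclideanSpace ℝ (Fin N) → ℝ} {s : Set (EuclideanSpace ℝ (Fin N))}
    (hs : IsOpen s) (hf : ContDiffOn ℝ 2 f s) {x : EuclideanSpace ℝ (Fin N)} (hx : x ∈ s)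
    (z : EuclideanSpace ℝ (Fin N)) :
    DifferentiableAt ℝ (fun y => fderiv ℝ f y z) x := by
  have hF : ContDiffOn ℝ 1 (fderiv ℝ f) s := hf.fderiv_of_isOpen hs (by norm_num)
  have hFd : DifferentiableAt ℝ (fderiv ℝ f) x :=
    (hF.contDiffAt (hs.mem_nhds hx)).differentiableAt (by norm_num)
  exact (ContinuousLinearMap.apply ℝ ℝ z).differentiableAt.comp x hFd

/-- Directional second derivative is nonpositive at an interior local max. -/
lemma d2_nonpos_of_isLocalMax {f : EuclideanSpace ℝ (Fin N) → ℝ}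
    {s : Set (EuclideanSpace ℝ (Fin N))}
    (hs : IsOpen s) (hf : ContDiffOn ℝ 2 f s) {x : EuclideanSpace ℝ (Fin N)} (hx : x ∈ s)
    (hmax : IsLocalMax f x) (e : EuclideanSpace ℝ (Fin N)) :
    fderiv ℝ (fun y => fderiv ℝ f y e) x e ≤ 0 := by
  set L : ℝ → EuclideanSpace ℝ (Fin N) := fun t => x + t • e with hLdef
  have hL0 : L 0 = x := by simp [hLdef]
  have hLd : ∀ t : ℝ, HasDerivAt L e t := by
    intro t
    have h := ((hasDerivAt_id t).smul_const e).const_add x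
    rw [one_smul] at h
    exact h
  have hLc : Continuous L := by
    exact continuous_const.add (continuous_id.smul continuous_const)
  have hT : IsOpen (L ⁻¹' s) := hs.preimage hLc
  have hT0 : (0:ℝ) ∈ L ⁻¹' s := by simp [Set.mem_preimage, hL0, hx]
  have hfd : ∀ y ∈ s, DifferentiableAt ℝ f y := fun y hy =>
    (hf.contDiffAt (hs.mem_nhds hy)).differentiableAt (by norm_num)
  set g : ℝ → ℝ := fun t => f (L t) with hgdef
  have hg : ∀ t ∈ L ⁻¹' s, HasDerivAt g (fderiv ℝ f (L t) e) t := by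
    intro t ht
    have := ((hfd (L t) ht).hasFDerivAt).comp_hasDerivAt t (hLd t)
    simpa [hgdef, Function.comp_def] using this
  have hqd : DifferentiableAt ℝ (fun y => fderiv ℝ f y e) x := diffAt_partial hs hf hx e
  have hq : HasDerivAt (fun t => fderiv ℝ f (L t) e)
      (fderiv ℝ (fun y => fderiv ℝ f y e) x e) 0 := by
    have h1 : HasFDerivAt (fun y => fderiv ℝ f y e)
        (fderiv ℝ (fun y => fderiv ℝ f y e) x) (L 0) := by
      rw [hL0]; exact hqd.hasFDerivAt
    simpa [Function.comp_def] using h1.comp_hasDerivAt 0 (hLd 0)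
  have hev : deriv g =ᶠ[nhds (0:ℝ)] fun t => fderiv ℝ f (L t) e := by
    filter_upwards [hT.mem_nhds hT0] with t ht
    exact (hg t ht).deriv
  have hdg : HasDerivAt (deriv g) (fderiv ℝ (fun y => fderiv ℝ f y e) x e) 0 :=
    hq.congr_of_eventuallyEq hev
  have hgmax : IsLocalMax g 0 := by
    have hLt : Filter.Tendsto L (nhds 0) (nhds x) := by
      have := hLc.continuousAt (x := (0:ℝ))
      rwa [ContinuousAt, hL0] at this
    have h2 : ∀ᶠ t in nhds (0:ℝ), g t ≤ g 0 := by
      have := hLt.eventually hmax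
      simpa [hgdef, hL0] using this
    exact h2
  have hgdiff : ∀ᶠ t in nhds (0:ℝ), DifferentiableAt ℝ g t := by
    filter_upwards [hT.mem_nhds hT0] with t ht
    exact (hg t ht).differentiableAt
  exact second_deriv_nonpos_of_isLocalMax hgdiff hgmax hdg

lemma laplacian_nonpos_of_isLocalMax {f : EuclideanSpace ℝ (Fin N) → ℝ}
    {s : Set (EuclideanSpace ℝ (Fin N))}
    (hs : IsOpen s) (hf : ContDiffOn ℝ 2 f s) {x : EuclideanSpace ℝ (Fin N)} (hx : x ∈ s)
    (hmax : IsLocalMax f x) : laplacian f x ≤ 0 :=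
  Finset.sum_nonpos fun i _ => d2_nonpos_of_isLocalMax hs hf hx hmax _

lemma hasFDerivAt_log_comp {u : EuclideanSpace ℝ (Fin N) → ℝ}
    {y : EuclideanSpace ℝ (Fin N)} (hd : DifferentiableAt ℝ u y) (hpos : 0 < u y) :
    HasFDerivAt (fun z => Real.log (u z)) ((u y)⁻¹ • fderiv ℝ u y) y := by
  have := (Real.hasDerivAt_log hpos.ne').comp_hasFDerivAt y hd.hasFDerivAt
  simpa [Function.comp_def] using this

/-- Laplacian of `log u - log v` at an interior critical point. -/
lemma laplacian_log_diff_at_critical {u v : EuclideanSpace ℝ (Fin N) → ℝ}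
    {s : Set (EuclideanSpace ℝ (Fin N))} (hs : IsOpen s)
    (hu : ContDiffOn ℝ 2 u s) (hv : ContDiffOn ℝ 2 v s)
    (hupos : ∀ y ∈ s, 0 < u y) (hvpos : ∀ y ∈ s, 0 < v y)
    {x : EuclideanSpace ℝ (Fin N)} (hx : x ∈ s)
    (hcrit : fderiv ℝ (fun y => Real.log (u y) - Real.log (v y)) x = 0) :
    laplacian (fun y => Real.log (u y) - Real.log (v y)) x
      = laplacian u x / u x - laplacian v x / v x := by
  set w : EuclideanSpace ℝ (Fin N) → ℝ := fun y => Real.log (u y) - Real.log (v y) with hwdef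
  have hud : ∀ y ∈ s, DifferentiableAt ℝ u y := fun y hy =>
    (hu.contDiffAt (hs.mem_nhds hy)).differentiableAt (by norm_num)
  have hvd : ∀ y ∈ s, DifferentiableAt ℝ v y := fun y hy =>
    (hv.contDiffAt (hs.mem_nhds hy)).differentiableAt (by norm_num)
  have hw : ∀ y ∈ s, HasFDerivAt w
      ((u y)⁻¹ • fderiv ℝ u y - (v y)⁻¹ • fderiv ℝ v y) y := fun y hy =>
    (hasFDerivAt_log_comp (hud y hy) (hupos y hy)).sub
      (hasFDerivAt_log_comp (hvd y hy) (hvpos y hy))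
  -- the critical point relation
  have hcrit' : ∀ z, (u x)⁻¹ * fderiv ℝ u x z = (v x)⁻¹ * fderiv ℝ v x z := by
    intro z
    have h1 : fderiv ℝ w x = (u x)⁻¹ • fderiv ℝ u x - (v x)⁻¹ • fderiv ℝ v x :=
      (hw x hx).fderiv
    have h2 : ((u x)⁻¹ • fderiv ℝ u x - (v x)⁻¹ • fderiv ℝ v x) z = 0 := by
      rw [← h1, hcrit]; rfl
    simpa [sub_eq_zero, ContinuousLinearMap.sub_apply, ContinuousLinearMap.smul_apply,
      smul_eq_mul] using h2
  have hkey : ∀ i : Fin N,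
      fderiv ℝ (fun y => fderiv ℝ w y (EuclideanSpace.single i 1)) x (EuclideanSpace.single i 1)
        = fderiv ℝ (fun y => fderiv ℝ u y (EuclideanSpace.single i 1)) x
            (EuclideanSpace.single i 1) / u x
          - fderiv ℝ (fun y => fderiv ℝ v y (EuclideanSpace.single i 1)) x
            (EuclideanSpace.single i 1) / v x := by
    intro i
    set e : EuclideanSpace ℝ (Fin N) := EuclideanSpace.single i 1 with hedef
    have hne_u : u x ≠ 0 := (hupos x hx).ne'
    have hne_v : v x ≠ 0 := (hvpos x hx).ne'
    -- eventual equality of first derivatives in direction e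
    have heq : (fun y => fderiv ℝ w y e)
        =ᶠ[nhds x] fun y => (u y)⁻¹ * fderiv ℝ u y e - (v y)⁻¹ * fderiv ℝ v y e := by
      filter_upwards [hs.mem_nhds hx] with y hy
      rw [(hw y hy).fderiv]
      simp [ContinuousLinearMap.sub_apply, ContinuousLinearMap.smul_apply, smul_eq_mul]
    -- derivative of the right-hand side
    have hqu : HasFDerivAt (fun y => fderiv ℝ u y e)
        (fderiv ℝ (fun y => fderiv ℝ u y e) x) x :=
      (diffAt_partial hs hu hx e).hasFDerivAt
    have hqv : HasFDerivAt (fun y => fderiv ℝ v y e)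
        (fderiv ℝ (fun y => fderiv ℝ v y e) x) x :=
      (diffAt_partial hs hv hx e).hasFDerivAt
    have hiu : HasFDerivAt (fun y => (u y)⁻¹)
        ((-(u x ^ 2)⁻¹) • fderiv ℝ u x) x := by
      have := (hasDerivAt_inv hne_u).comp_hasFDerivAt x (hud x hx).hasFDerivAt
      simpa [Function.comp_def] using this
    have hiv : HasFDerivAt (fun y => (v y)⁻¹)
        ((-(v x ^ 2)⁻¹) • fderiv ℝ v x) x := by
      have := (hasDerivAt_inv hne_v).comp_hasFDerivAt x (hvd x hx).hasFDerivAt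
      simpa [Function.comp_def] using this
    have hR : HasFDerivAt (fun y => (u y)⁻¹ * fderiv ℝ u y e - (v y)⁻¹ * fderiv ℝ v y e)
        (((u x)⁻¹ • fderiv ℝ (fun y => fderiv ℝ u y e) x
            + fderiv ℝ u x e • ((-(u x ^ 2)⁻¹) • fderiv ℝ u x))
          - ((v x)⁻¹ • fderiv ℝ (fun y => fderiv ℝ v y e) x
            + fderiv ℝ v x e • ((-(v x ^ 2)⁻¹) • fderiv ℝ v x))) x :=
      (hiu.mul hqu).sub (hiv.mul hqv)
    have hD : fderiv ℝ (fun y => fderiv ℝ w y e) x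
        = (((u x)⁻¹ • fderiv ℝ (fun y => fderiv ℝ u y e) x
            + fderiv ℝ u x e • ((-(u x ^ 2)⁻¹) • fderiv ℝ u x))
          - ((v x)⁻¹ • fderiv ℝ (fun y => fderiv ℝ v y e) x
            + fderiv ℝ v x e • ((-(v x ^ 2)⁻¹) • fderiv ℝ v x))) := by
      rw [heq.fderiv_eq, hR.fderiv]
    rw [hD]
    have hpoly : v x * fderiv ℝ u x e = u x * fderiv ℝ v x e := by
      have h := hcrit' e
      field_simp at h
      linarith [h]
    have hsq2 : fderiv ℝ u x e ^ 2 / u x ^ 2 = fderiv ℝ v x e ^ 2 / v x ^ 2 := by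
      rw [div_eq_div_iff (pow_ne_zero 2 hne_u) (pow_ne_zero 2 hne_v)]
      linear_combination (v x * fderiv ℝ u x e + u x * fderiv ℝ v x e) * hpoly
    simp only [ContinuousLinearMap.sub_apply, ContinuousLinearMap.add_apply,
      ContinuousLinearMap.smul_apply, smul_eq_mul]
    linear_combination -hsq2
  -- sum up
  unfold laplacian
  calc (∑ i : Fin N, fderiv ℝ (fun y => fderiv ℝ w y (EuclideanSpace.single i 1)) x
          (EuclideanSpace.single i 1))
      = ∑ i : Fin N,
          (fderiv ℝ (fun y => fderiv ℝ u y (EuclideanSpace.single i 1)) x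
              (EuclideanSpace.single i 1) / u x
            - fderiv ℝ (fun y => fderiv ℝ v y (EuclideanSpace.single i 1)) x
              (EuclideanSpace.single i 1) / v x) := Finset.sum_congr rfl fun i _ => hkey i
    _ = _ := by
        rw [Finset.sum_sub_distrib, ← Finset.sum_div, ← Finset.sum_div]

end Aux

section Key

/-- One-sided comparison for the abstract cooperative system via the maximum principle. -/
lemma key_one_sided {N : ℕ} {R : ℝ} (hR : 0 < R)
    {c₁ c₂ d₁ d₂ : ℝ} (hc₁ : 0 < c₁) (hc₂ : 0 < c₂) (hd₁ : 0 < d₁) (hd₂ : 0 < d₂)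
    (hcd : d₁ * d₂ < c₁ * c₂)
    (g₁ g₂ : EuclideanSpace ℝ (Fin N) → ℝ)
    {u₁ u₂ v₁ v₂ : EuclideanSpace ℝ (Fin N) → ℝ}
    (hu₁pos : ∀ x ∈ closedBall (0 : EuclideanSpace ℝ (Fin N)) R, 0 < u₁ x)
    (hu₂pos : ∀ x ∈ closedBall (0 : EuclideanSpace ℝ (Fin N)) R, 0 < u₂ x)
    (hv₁pos : ∀ x ∈ closedBall (0 : EuclideanSpace ℝ (Fin N)) R, 0 < v₁ x)
    (hv₂pos : ∀ x ∈ closedBall (0 : EuclideanSpace ℝ (Fin N)) R, 0 < v₂ x)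
    (hu₁ : ContDiffOn ℝ 2 u₁ (ball (0 : EuclideanSpace ℝ (Fin N)) R))
    (hu₂ : ContDiffOn ℝ 2 u₂ (ball (0 : EuclideanSpace ℝ (Fin N)) R))
    (hv₁ : ContDiffOn ℝ 2 v₁ (ball (0 : EuclideanSpace ℝ (Fin N)) R))
    (hv₂ : ContDiffOn ℝ 2 v₂ (ball (0 : EuclideanSpace ℝ (Fin N)) R))
    (hu₁c : ContinuousOn u₁ (closedBall (0 : EuclideanSpace ℝ (Fin N)) R))
    (hu₂c : ContinuousOn u₂ (closedBall (0 : EuclideanSpace ℝ (Fin N)) R))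
    (hv₁c : ContinuousOn v₁ (closedBall (0 : EuclideanSpace ℝ (Fin N)) R))
    (hv₂c : ContinuousOn v₂ (closedBall (0 : EuclideanSpace ℝ (Fin N)) R))
    (hu : ∀ x ∈ ball (0 : EuclideanSpace ℝ (Fin N)) R,
      laplacian u₁ x = u₁ x * (g₁ x + c₁ * Real.log (u₁ x) - d₁ * Real.log (u₂ x)) ∧
      laplacian u₂ x = u₂ x * (g₂ x + c₂ * Real.log (u₂ x) - d₂ * Real.log (u₁ x)))
    (hv : ∀ x ∈ ball (0 : EuclideanSpace ℝ (Fin N)) R,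
      laplacian v₁ x = v₁ x * (g₁ x + c₁ * Real.log (v₁ x) - d₁ * Real.log (v₂ x)) ∧
      laplacian v₂ x = v₂ x * (g₂ x + c₂ * Real.log (v₂ x) - d₂ * Real.log (v₁ x)))
    (hubd : ∀ x ∈ sphere (0 : EuclideanSpace ℝ (Fin N)) R, u₁ x = 1 ∧ u₂ x = 1)
    (hvbd : ∀ x ∈ sphere (0 : EuclideanSpace ℝ (Fin N)) R, v₁ x = 1 ∧ v₂ x = 1) :
    ∀ x ∈ closedBall (0 : EuclideanSpace ℝ (Fin N)) R,
      Real.log (u₁ x) ≤ Real.log (v₁ x) ∧ Real.log (u₂ x) ≤ Real.log (v₂ x) := by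
  -- choose the weight
  have h1 : d₁ / c₁ < c₂ / d₂ := by
    rw [div_lt_div_iff₀ hc₁ hd₂]
    nlinarith [hcd]
  set lam : ℝ := (d₁ / c₁ + c₂ / d₂) / 2 with hlamdef
  have hq1 : 0 < d₁ / c₁ := div_pos hd₁ hc₁
  have hq2 : 0 < c₂ / d₂ := div_pos hc₂ hd₂
  have hlam : 0 < lam := by rw [hlamdef]; linarith
  have hlamA : d₁ < c₁ * lam := by
    have : d₁ / c₁ < lam := by rw [hlamdef]; linarith
    have := (div_lt_iff₀ hc₁).mp this
    linarith [this]
  have hlamB : d₂ * lam < c₂ := by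
    have : lam < c₂ / d₂ := by rw [hlamdef]; linarith
    have := (lt_div_iff₀ hd₂).mp this
    linarith [this]
  -- the function to maximize
  set w₁ : EuclideanSpace ℝ (Fin N) → ℝ := fun y => Real.log (u₁ y) - Real.log (v₁ y)
    with hw₁def
  set w₂ : EuclideanSpace ℝ (Fin N) → ℝ := fun y => Real.log (u₂ y) - Real.log (v₂ y)
    with hw₂def
  set W : EuclideanSpace ℝ (Fin N) → ℝ := fun y => max (w₁ y) (lam * w₂ y) with hWdef
  have hw₁c : ContinuousOn w₁ (closedBall (0 : EuclideanSpace ℝ (Fin N)) R) :=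
    (hu₁c.log fun x hx => (hu₁pos x hx).ne').sub (hv₁c.log fun x hx => (hv₁pos x hx).ne')
  have hw₂c : ContinuousOn w₂ (closedBall (0 : EuclideanSpace ℝ (Fin N)) R) :=
    (hu₂c.log fun x hx => (hu₂pos x hx).ne').sub (hv₂c.log fun x hx => (hv₂pos x hx).ne')
  have hWc : ContinuousOn W (closedBall (0 : EuclideanSpace ℝ (Fin N)) R) :=
    fun x hx => (hw₁c x hx).max ((continuousOn_const.mul hw₂c) x hx)
  obtain ⟨x₀, hx₀K, hmax⟩ :=
    (isCompact_closedBall (0 : EuclideanSpace ℝ (Fin N)) R).exists_isMaxOn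
      ⟨0, mem_closedBall_self hR.le⟩ hWc
  -- reduce to showing W x₀ ≤ 0
  suffices hM : W x₀ ≤ 0 by
    intro x hx
    have hWx : W x ≤ 0 := le_trans (hmax hx) hM
    have h1' : w₁ x ≤ 0 := le_trans (le_max_left _ _) hWx
    have h2' : lam * w₂ x ≤ 0 := le_trans (le_max_right _ _) hWx
    have h2'' : w₂ x ≤ 0 := by
      have h0 : lam * w₂ x ≤ lam * 0 := by simpa using h2'
      exact (mul_le_mul_iff_right₀ hlam).mp h0
    constructor
    · have := h1'; rw [hw₁def] at this; simp only [sub_nonpos] at this; exact this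
    · have := h2''; rw [hw₂def] at this; simp only [sub_nonpos] at this; exact this
  by_contra hMpos'
  push_neg at hMpos'
  -- the max point is interior
  have hx₀b : x₀ ∈ ball (0 : EuclideanSpace ℝ (Fin N)) R := by
    rcases eq_or_lt_of_le (mem_closedBall.mp hx₀K) with heq | hlt
    · exfalso
      have hsph : x₀ ∈ sphere (0 : EuclideanSpace ℝ (Fin N)) R := mem_sphere.mpr heq
      obtain ⟨e1, e2⟩ := hubd x₀ hsph
      obtain ⟨e3, e4⟩ := hvbd x₀ hsph
      have : W x₀ = 0 := by
        rw [hWdef]; simp [hw₁def, hw₂def, e1, e2, e3, e4]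
      rw [this] at hMpos'
      exact lt_irrefl _ hMpos'
    · exact mem_ball.mpr hlt
  have hballnhds : ball (0 : EuclideanSpace ℝ (Fin N)) R ∈ nhds x₀ :=
    isOpen_ball.mem_nhds hx₀b
  have hu₁posb : ∀ y ∈ ball (0 : EuclideanSpace ℝ (Fin N)) R, 0 < u₁ y :=
    fun y hy => hu₁pos y (ball_subset_closedBall hy)
  have hu₂posb : ∀ y ∈ ball (0 : EuclideanSpace ℝ (Fin N)) R, 0 < u₂ y :=
    fun y hy => hu₂pos y (ball_subset_closedBall hy)
  have hv₁posb : ∀ y ∈ ball (0 : EuclideanSpace ℝ (Fin N)) R, 0 < v₁ y :=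
    fun y hy => hv₁pos y (ball_subset_closedBall hy)
  have hv₂posb : ∀ y ∈ ball (0 : EuclideanSpace ℝ (Fin N)) R, 0 < v₂ y :=
    fun y hy => hv₂pos y (ball_subset_closedBall hy)
  -- smoothness of the log-differences
  have hw₁sm : ContDiffOn ℝ 2 w₁ (ball (0 : EuclideanSpace ℝ (Fin N)) R) := by
    intro y hy
    have h1 : ContDiffAt ℝ 2 (fun z => Real.log (u₁ z)) y :=
      (Real.contDiffAt_log.mpr (hu₁posb y hy).ne').comp y
        (hu₁.contDiffAt (isOpen_ball.mem_nhds hy))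
    have h2 : ContDiffAt ℝ 2 (fun z => Real.log (v₁ z)) y :=
      (Real.contDiffAt_log.mpr (hv₁posb y hy).ne').comp y
        (hv₁.contDiffAt (isOpen_ball.mem_nhds hy))
    exact (h1.sub h2).contDiffWithinAt
  have hw₂sm : ContDiffOn ℝ 2 w₂ (ball (0 : EuclideanSpace ℝ (Fin N)) R) := by
    intro y hy
    have h1 : ContDiffAt ℝ 2 (fun z => Real.log (u₂ z)) y :=
      (Real.contDiffAt_log.mpr (hu₂posb y hy).ne').comp y
        (hu₂.contDiffAt (isOpen_ball.mem_nhds hy))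
    have h2 : ContDiffAt ℝ 2 (fun z => Real.log (v₂ z)) y :=
      (Real.contDiffAt_log.mpr (hv₂posb y hy).ne').comp y
        (hv₂.contDiffAt (isOpen_ball.mem_nhds hy))
    exact (h1.sub h2).contDiffWithinAt
  -- the PDE quotients at x₀
  have hne₁ : u₁ x₀ ≠ 0 := (hu₁pos x₀ hx₀K).ne'
  have hne₂ : u₂ x₀ ≠ 0 := (hu₂pos x₀ hx₀K).ne'
  have hne₃ : v₁ x₀ ≠ 0 := (hv₁pos x₀ hx₀K).ne'
  have hne₄ : v₂ x₀ ≠ 0 := (hv₂pos x₀ hx₀K).ne'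
  have eu₁ : laplacian u₁ x₀ / u₁ x₀
      = g₁ x₀ + c₁ * Real.log (u₁ x₀) - d₁ * Real.log (u₂ x₀) := by
    rw [(hu x₀ hx₀b).1]; field_simp
  have eu₂ : laplacian u₂ x₀ / u₂ x₀
      = g₂ x₀ + c₂ * Real.log (u₂ x₀) - d₂ * Real.log (u₁ x₀) := by
    rw [(hu x₀ hx₀b).2]; field_simp
  have ev₁ : laplacian v₁ x₀ / v₁ x₀
      = g₁ x₀ + c₁ * Real.log (v₁ x₀) - d₁ * Real.log (v₂ x₀) := by
    rw [(hv x₀ hx₀b).1]; field_simp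
  have ev₂ : laplacian v₂ x₀ / v₂ x₀
      = g₂ x₀ + c₂ * Real.log (v₂ x₀) - d₂ * Real.log (v₁ x₀) := by
    rw [(hv x₀ hx₀b).2]; field_simp
  rcases max_cases (w₁ x₀) (lam * w₂ x₀) with ⟨hWeq, hge⟩ | ⟨hWeq, hlt2⟩
  · -- case: the max is attained by w₁
    have hMA : 0 < w₁ x₀ := by
      have : W x₀ = w₁ x₀ := hWeq
      rw [this] at hMpos'; exact hMpos'
    have hloc : IsLocalMax w₁ x₀ := by
      show ∀ᶠ y in nhds x₀, w₁ y ≤ w₁ x₀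
      filter_upwards [hballnhds] with y hy
      have h1' : w₁ y ≤ W y := le_max_left _ _
      have h2' : W y ≤ W x₀ := hmax (ball_subset_closedBall hy)
      have h3' : W x₀ = w₁ x₀ := hWeq
      linarith
    have hcrit : fderiv ℝ w₁ x₀ = 0 := hloc.fderiv_eq_zero
    have hlapeq : laplacian w₁ x₀ = laplacian u₁ x₀ / u₁ x₀ - laplacian v₁ x₀ / v₁ x₀ :=
      laplacian_log_diff_at_critical isOpen_ball hu₁ hv₁ hu₁posb hv₁posb hx₀b
        (by rw [hw₁def] at hcrit; exact hcrit)
    have hlaple : laplacian w₁ x₀ ≤ 0 :=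
      laplacian_nonpos_of_isLocalMax isOpen_ball hw₁sm hx₀b hloc
    have hK1 : c₁ * w₁ x₀ - d₁ * w₂ x₀ ≤ 0 := by
      rw [hlapeq, eu₁, ev₁] at hlaple
      rw [hw₁def, hw₂def]
      simp only
      linarith
    have hK2 : lam * w₂ x₀ ≤ w₁ x₀ := hge
    have t1 : d₁ * (lam * w₂ x₀) ≤ d₁ * w₁ x₀ := mul_le_mul_of_nonneg_left hK2 hd₁.le
    have t2 : d₁ * w₁ x₀ < c₁ * lam * w₁ x₀ := mul_lt_mul_of_pos_right hlamA hMA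
    have t3 : lam * (c₁ * w₁ x₀ - d₁ * w₂ x₀) ≤ lam * 0 := mul_le_mul_of_nonneg_left hK1 hlam.le
    nlinarith [t1, t2, t3]
  · -- case: the max is attained by lam * w₂
    have hMB : 0 < lam * w₂ x₀ := by
      have : W x₀ = lam * w₂ x₀ := hWeq
      rw [this] at hMpos'; exact hMpos'
    have hCD : 0 < w₂ x₀ := by
      by_contra h
      push_neg at h
      have := mul_nonpos_of_nonneg_of_nonpos hlam.le h
      linarith
    have hloc : IsLocalMax w₂ x₀ := by
      show ∀ᶠ y in nhds x₀, w₂ y ≤ w₂ x₀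
      filter_upwards [hballnhds] with y hy
      have h1' : lam * w₂ y ≤ W y := le_max_right _ _
      have h2' : W y ≤ W x₀ := hmax (ball_subset_closedBall hy)
      have h3' : W x₀ = lam * w₂ x₀ := hWeq
      have h4' : lam * w₂ y ≤ lam * w₂ x₀ := by linarith
      exact (mul_le_mul_iff_right₀ hlam).mp h4'
    have hcrit : fderiv ℝ w₂ x₀ = 0 := hloc.fderiv_eq_zero
    have hlapeq : laplacian w₂ x₀ = laplacian u₂ x₀ / u₂ x₀ - laplacian v₂ x₀ / v₂ x₀ :=
      laplacian_log_diff_at_critical isOpen_ball hu₂ hv₂ hu₂posb hv₂posb hx₀b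
        (by rw [hw₂def] at hcrit; exact hcrit)
    have hlaple : laplacian w₂ x₀ ≤ 0 :=
      laplacian_nonpos_of_isLocalMax isOpen_ball hw₂sm hx₀b hloc
    have hK1 : c₂ * w₂ x₀ - d₂ * w₁ x₀ ≤ 0 := by
      rw [hlapeq, eu₂, ev₂] at hlaple
      rw [hw₁def, hw₂def]
      simp only
      linarith
    have hK2 : w₁ x₀ ≤ lam * w₂ x₀ := hlt2.le
    have t1 : d₂ * w₁ x₀ ≤ d₂ * (lam * w₂ x₀) := mul_le_mul_of_nonneg_left hK2 hd₂.le
    have t2 : d₂ * lam * w₂ x₀ < c₂ * w₂ x₀ := mul_lt_mul_of_pos_right hlamB hCD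
    have t1' : d₂ * w₁ x₀ ≤ d₂ * lam * w₂ x₀ := by rw [mul_assoc]; exact t1
    linarith [hK1, t1', t2]

end Key

/-- Uniqueness of positive solutions of the logarithmically transformed HJB system with
boundary value `1`: any two such pairs coincide on the closed ball. -/
theorem transformed_system_unique (N : ℕ) (hN : 0 < N) (R : ℝ) (hR : 0 < R)
    (a₁ α₁ a₂ α₂ σ₁ σ₂ : ℝ)
    (ha₁ : 0 < a₁) (hα₁ : 0 < α₁) (ha₂ : 0 < a₂) (hα₂ : 0 < α₂)
    (hσ₁ : 0 < σ₁) (hσ₂ : 0 < σ₂)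
    (f₁ f₂ : EuclideanSpace ℝ (Fin N) → ℝ)
    (hf₁c : Continuous f₁) (hf₂c : Continuous f₂)
    (u₁ u₂ v₁ v₂ : EuclideanSpace ℝ (Fin N) → ℝ)
    (hu₁pos : ∀ x ∈ closedBall (0 : EuclideanSpace ℝ (Fin N)) R, 0 < u₁ x)
    (hu₂pos : ∀ x ∈ closedBall (0 : EuclideanSpace ℝ (Fin N)) R, 0 < u₂ x)
    (hv₁pos : ∀ x ∈ closedBall (0 : EuclideanSpace ℝ (Fin N)) R, 0 < v₁ x)
    (hv₂pos : ∀ x ∈ closedBall (0 : EuclideanSpace ℝ (Fin N)) R, 0 < v₂ x)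
    (hu₁ : ContDiffOn ℝ 2 u₁ (ball (0 : EuclideanSpace ℝ (Fin N)) R))
    (hu₂ : ContDiffOn ℝ 2 u₂ (ball (0 : EuclideanSpace ℝ (Fin N)) R))
    (hv₁ : ContDiffOn ℝ 2 v₁ (ball (0 : EuclideanSpace ℝ (Fin N)) R))
    (hv₂ : ContDiffOn ℝ 2 v₂ (ball (0 : EuclideanSpace ℝ (Fin N)) R))
    (hu₁c : ContinuousOn u₁ (closedBall (0 : EuclideanSpace ℝ (Fin N)) R))
    (hu₂c : ContinuousOn u₂ (closedBall (0 : EuclideanSpace ℝ (Fin N)) R))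
    (hv₁c : ContinuousOn v₁ (closedBall (0 : EuclideanSpace ℝ (Fin N)) R))
    (hv₂c : ContinuousOn v₂ (closedBall (0 : EuclideanSpace ℝ (Fin N)) R))
    (hu : ∀ x ∈ ball (0 : EuclideanSpace ℝ (Fin N)) R,
      laplacian u₁ x = u₁ x * (f₁ x / σ₁ ^ 4 + 2 * (a₁ + α₁) / σ₁ ^ 2 * Real.log (u₁ x)
        - 2 * a₁ * σ₂ ^ 2 / σ₁ ^ 4 * Real.log (u₂ x)) ∧
      laplacian u₂ x = u₂ x * (f₂ x / σ₂ ^ 4 + 2 * (a₂ + α₂) / σ₂ ^ 2 * Real.log (u₂ x)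
        - 2 * a₂ * σ₁ ^ 2 / σ₂ ^ 4 * Real.log (u₁ x)))
    (hv : ∀ x ∈ ball (0 : EuclideanSpace ℝ (Fin N)) R,
      laplacian v₁ x = v₁ x * (f₁ x / σ₁ ^ 4 + 2 * (a₁ + α₁) / σ₁ ^ 2 * Real.log (v₁ x)
        - 2 * a₁ * σ₂ ^ 2 / σ₁ ^ 4 * Real.log (v₂ x)) ∧
      laplacian v₂ x = v₂ x * (f₂ x / σ₂ ^ 4 + 2 * (a₂ + α₂) / σ₂ ^ 2 * Real.log (v₂ x)
        - 2 * a₂ * σ₁ ^ 2 / σ₂ ^ 4 * Real.log (v₁ x)))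
    (hubd : ∀ x ∈ sphere (0 : EuclideanSpace ℝ (Fin N)) R, u₁ x = 1 ∧ u₂ x = 1)
    (hvbd : ∀ x ∈ sphere (0 : EuclideanSpace ℝ (Fin N)) R, v₁ x = 1 ∧ v₂ x = 1) :
    Set.EqOn u₁ v₁ (closedBall (0 : EuclideanSpace ℝ (Fin N)) R) ∧
    Set.EqOn u₂ v₂ (closedBall (0 : EuclideanSpace ℝ (Fin N)) R) := by
  have hc₁ : (0:ℝ) < 2 * (a₁ + α₁) / σ₁ ^ 2 := div_pos (by linarith) (pow_pos hσ₁ 2)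
  have hc₂ : (0:ℝ) < 2 * (a₂ + α₂) / σ₂ ^ 2 := div_pos (by linarith) (pow_pos hσ₂ 2)
  have hd₁ : (0:ℝ) < 2 * a₁ * σ₂ ^ 2 / σ₁ ^ 4 :=
    div_pos (mul_pos (by linarith) (pow_pos hσ₂ 2)) (pow_pos hσ₁ 4)
  have hd₂ : (0:ℝ) < 2 * a₂ * σ₁ ^ 2 / σ₂ ^ 4 :=
    div_pos (mul_pos (by linarith) (pow_pos hσ₁ 2)) (pow_pos hσ₂ 4)
  have hcd : (2 * a₁ * σ₂ ^ 2 / σ₁ ^ 4) * (2 * a₂ * σ₁ ^ 2 / σ₂ ^ 4)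
      < (2 * (a₁ + α₁) / σ₁ ^ 2) * (2 * (a₂ + α₂) / σ₂ ^ 2) := by
    rw [div_mul_div_comm, div_mul_div_comm,
      div_lt_div_iff₀ (by positivity) (by positivity)]
    nlinarith [mul_pos (pow_pos hσ₁ 2) (pow_pos hσ₂ 2),
      mul_pos (mul_pos (pow_pos hσ₁ 4) (pow_pos hσ₂ 4)) (mul_pos hσ₁ hσ₂),
      mul_pos (mul_pos (pow_pos hσ₁ 2) (pow_pos hσ₂ 2)) (mul_pos hα₁ hα₂),
      mul_pos (mul_pos (pow_pos hσ₁ 2) (pow_pos hσ₂ 2)) (mul_pos ha₁ hα₂),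
      mul_pos (mul_pos (pow_pos hσ₁ 2) (pow_pos hσ₂ 2)) (mul_pos hα₁ ha₂),
      mul_pos (pow_pos hσ₁ 4) (pow_pos hσ₂ 4)]
  have h12 := key_one_sided hR hc₁ hc₂ hd₁ hd₂ hcd (fun x => f₁ x / σ₁ ^ 4)
    (fun x => f₂ x / σ₂ ^ 4) hu₁pos hu₂pos hv₁pos hv₂pos hu₁ hu₂ hv₁ hv₂
    hu₁c hu₂c hv₁c hv₂c hu hv hubd hvbd
  have h21 := key_one_sided hR hc₁ hc₂ hd₁ hd₂ hcd (fun x => f₁ x / σ₁ ^ 4)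
    (fun x => f₂ x / σ₂ ^ 4) hv₁pos hv₂pos hu₁pos hu₂pos hv₁ hv₂ hu₁ hu₂
    hv₁c hv₂c hu₁c hu₂c hv hu hvbd hubd
  constructor
  · intro x hx
    have hlog : Real.log (u₁ x) = Real.log (v₁ x) :=
      le_antisymm (h12 x hx).1 (h21 x hx).1
    exact Real.log_injOn_pos (Set.mem_Ioi.mpr (hu₁pos x hx))
      (Set.mem_Ioi.mpr (hv₁pos x hx)) hlog
  · intro x hx
    have hlog : Real.log (u₂ x) = Real.log (v₂ x) :=
      le_antisymm (h12 x hx).2 (h21 x hx).2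
    exact Real.log_injOn_pos (Set.mem_Ioi.mpr (hu₂pos x hx))
      (Set.mem_Ioi.mpr (hv₂pos x hx)) hlog
end

section
/- Let N be a positive integer, R > 0, a₁, a₂ > 0, σ₁ = σ₂ > 0, 0 < α₁ < α₂, and let f₁ = f₂ : ℝᴺ → ℝ be a continuous convex function with 0 ≤ f₁(x) ≤ M‖x‖² for some M > 0. Let (z₁, z₂) be the positive solution, twice continuously differentiable on the open ball B_R ⊂ ℝᴺ and continuous on the closed ball, of the system −a₁z₂ + (a₁+α₁)z₁ − (σ₁²/2)Δz₁ − f₁(x) = −(1/4)‖∇z₁‖² and −a₂z₁ + (a₂+α₂)z₂ − (σ₂²/2)Δz₂ − f₂(x) = −(1/4)‖∇z₂‖² on B_R with z₁ = z₂ = 0 on ∂B_R. Then z₁(x) ≥ z₂(x) for all x in the closed ball; that is, a higher discount rate decreases the value function. -/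
open Metric

open Filter Set

lemma second_deriv_nonneg_of_isLocalMin {g : ℝ → ℝ} {Q : ℝ}
    (hmin : IsLocalMin g 0)
    (hd : ∀ᶠ t in nhds (0:ℝ), DifferentiableAt ℝ g t)
    (hQ : HasDerivAt (deriv g) Q 0) : 0 ≤ Q := by
  by_contra hneg
  push_neg at hneg
  have h0 : deriv g 0 = 0 := hmin.deriv_eq_zero
  have hslope := hasDerivAt_iff_tendsto_slope.mp hQ
  have hev : ∀ᶠ t in nhdsWithin (0:ℝ) {(0:ℝ)}ᶜ, slope (deriv g) 0 t < 0 :=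
    hslope.eventually (gt_mem_nhds hneg)
  rw [eventually_nhdsWithin_iff] at hev
  have hall : ∀ᶠ t in nhds (0:ℝ),
      (t ∈ ({(0:ℝ)}ᶜ : Set ℝ) → slope (deriv g) 0 t < 0)
        ∧ DifferentiableAt ℝ g t ∧ g 0 ≤ g t := hev.and (hd.and hmin)
  obtain ⟨ε, hε, hball⟩ := Metric.eventually_nhds_iff.mp hall
  have hdist : ∀ t ∈ Set.Icc (0:ℝ) (ε/2), dist t 0 < ε := by
    intro t ht
    rw [Real.dist_eq, sub_zero, abs_of_nonneg ht.1]
    linarith [ht.2]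
  have hcont : ContinuousOn g (Set.Icc 0 (ε/2)) := fun t ht =>
    ((hball (hdist t ht)).2.1).continuousAt.continuousWithinAt
  have hderivneg : ∀ t ∈ interior (Set.Icc (0:ℝ) (ε/2)), deriv g t < 0 := by
    intro t ht
    rw [interior_Icc] at ht
    have ht' : dist t 0 < ε := hdist t ⟨ht.1.le, ht.2.le⟩
    have hs := (hball ht').1 (by simpa using ne_of_gt ht.1)
    rw [slope_def_field, h0, sub_zero, sub_zero] at hs
    have := (div_neg_iff.mp hs)
    rcases this with ⟨h1, h2⟩ | ⟨h1, h2⟩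
    · linarith [ht.1]
    · exact h1
  have hanti := strictAntiOn_of_deriv_neg (convex_Icc 0 (ε/2)) hcont hderivneg
  have h1 : g (ε/2) < g 0 :=
    hanti (Set.left_mem_Icc.mpr (by linarith)) (Set.right_mem_Icc.mpr (by linarith))
      (by linarith)
  have h2 : g 0 ≤ g (ε/2) :=
    (hball (hdist (ε/2) (Set.right_mem_Icc.mpr (by linarith)))).2.2
  linarith

lemma second_directional_nonneg {N : ℕ} {f : EuclideanSpace ℝ (Fin N) → ℝ}
    {x₀ v : EuclideanSpace ℝ (Fin N)}
    (hf : ContDiffAt ℝ 2 f x₀) (hmin : IsLocalMin f x₀)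
    (hd : ∀ᶠ t in nhds (0:ℝ), DifferentiableAt ℝ f (x₀ + t • v)) :
    0 ≤ fderiv ℝ (fun y => fderiv ℝ f y v) x₀ v := by
  set φ : ℝ → EuclideanSpace ℝ (Fin N) := fun t => x₀ + t • v with hφdef
  have hφ : ∀ t : ℝ, HasDerivAt φ v t := fun t => by
    simpa [hφdef] using ((hasDerivAt_id t).smul_const v).const_add x₀
  have hφ0 : φ 0 = x₀ := by simp [hφdef]
  have hφcont : Continuous φ := by
    exact continuous_const.add (continuous_id.smul continuous_const)
  set g : ℝ → ℝ := fun t => f (φ t) with hgdef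
  have hφtend : Filter.Tendsto φ (nhds 0) (nhds x₀) := by
    have := hφcont.tendsto (0:ℝ); rwa [hφ0] at this
  have hgmin : IsLocalMin g 0 := by
    have := hφtend.eventually hmin
    exact this.mono (fun t ht => by simpa [hgdef, hφ0] using ht)
  have hgd : ∀ᶠ t in nhds (0:ℝ), HasDerivAt g (fderiv ℝ f (φ t) v) t := by
    exact hd.mono (fun t ht => ht.hasFDerivAt.comp_hasDerivAt t (hφ t))
  have hgdiff : ∀ᶠ t in nhds (0:ℝ), DifferentiableAt ℝ g t :=
    hgd.mono fun t ht => ht.differentiableAt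
  have hderiveq : deriv g =ᶠ[nhds (0:ℝ)] fun t => fderiv ℝ f (φ t) v :=
    hgd.mono fun t ht => ht.deriv
  have hF : DifferentiableAt ℝ (fderiv ℝ f) x₀ :=
    (hf.fderiv_right (m := 1) (by norm_num)).differentiableAt (by norm_num)
  set F' := fderiv ℝ (fderiv ℝ f) x₀ with hF'def
  have hψ : HasDerivAt (fun t => fderiv ℝ f (φ t)) (F' v) 0 := by
    have hF' : HasFDerivAt (fderiv ℝ f) F' (φ 0) := by rw [hφ0]; exact hF.hasFDerivAt
    exact hF'.comp_hasDerivAt 0 (hφ 0)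
  have h2 : HasDerivAt (fun t => fderiv ℝ f (φ t) v) ((F' v) v) 0 := by
    have := hψ.clm_apply (hasDerivAt_const 0 v)
    simpa [hφ0] using this
  have hQ : fderiv ℝ (fun y => fderiv ℝ f y v) x₀ v = (F' v) v := by
    rw [fderiv_clm_apply hF (differentiableAt_const v)]
    simp [hF'def]
  rw [hQ]
  exact second_deriv_nonneg_of_isLocalMin hgmin hgdiff
    (h2.congr_of_eventuallyEq hderiveq)

/-- Sensitivity to the discount rate: with equal volatilities and equal holding costs,
a higher discount rate (`α₁ < α₂`) decreases the value function: `z₁ ≥ z₂`. -/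
theorem sensitivity_discount (N : ℕ) (hN : 0 < N) (R : ℝ) (hR : 0 < R)
    (a₁ a₂ α₁ α₂ σ₁ σ₂ M : ℝ)
    (ha₁ : 0 < a₁) (ha₂ : 0 < a₂) (hσ₁ : 0 < σ₁) (hσ : σ₁ = σ₂)
    (hα₁ : 0 < α₁) (hα : α₁ < α₂) (hM : 0 < M)
    (f₁ f₂ : EuclideanSpace ℝ (Fin N) → ℝ) (hf : f₁ = f₂)
    (hf₁c : Continuous f₁) (hf₁cv : ConvexOn ℝ Set.univ f₁)
    (hf₁b : ∀ x, 0 ≤ f₁ x ∧ f₁ x ≤ M * ‖x‖ ^ 2)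
    (z₁ z₂ : EuclideanSpace ℝ (Fin N) → ℝ)
    (hz₁ : ContDiffOn ℝ 2 z₁ (ball (0 : EuclideanSpace ℝ (Fin N)) R))
    (hz₂ : ContDiffOn ℝ 2 z₂ (ball (0 : EuclideanSpace ℝ (Fin N)) R))
    (hz₁c : ContinuousOn z₁ (closedBall (0 : EuclideanSpace ℝ (Fin N)) R))
    (hz₂c : ContinuousOn z₂ (closedBall (0 : EuclideanSpace ℝ (Fin N)) R))
    (hpos : ∀ x ∈ ball (0 : EuclideanSpace ℝ (Fin N)) R, 0 < z₁ x ∧ 0 < z₂ x)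
    (hpde : ∀ x ∈ ball (0 : EuclideanSpace ℝ (Fin N)) R,
      -a₁ * z₂ x + (a₁ + α₁) * z₁ x - σ₁ ^ 2 / 2 * laplacian z₁ x - f₁ x
        = -(1 / 4) * ‖gradient z₁ x‖ ^ 2 ∧
      -a₂ * z₁ x + (a₂ + α₂) * z₂ x - σ₂ ^ 2 / 2 * laplacian z₂ x - f₂ x
        = -(1 / 4) * ‖gradient z₂ x‖ ^ 2)
    (hbd : ∀ x ∈ sphere (0 : EuclideanSpace ℝ (Fin N)) R, z₁ x = 0 ∧ z₂ x = 0) :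
    ∀ x ∈ closedBall (0 : EuclideanSpace ℝ (Fin N)) R, z₂ x ≤ z₁ x := by
  set w : EuclideanSpace ℝ (Fin N) → ℝ := fun x => z₁ x - z₂ x with hwdef
  have hwc : ContinuousOn w (closedBall (0:EuclideanSpace ℝ (Fin N)) R) := hz₁c.sub hz₂c
  obtain ⟨x₀, hx₀K, hx₀min⟩ := (isCompact_closedBall (0:EuclideanSpace ℝ (Fin N)) R).exists_isMinOn
    ⟨0, by simp [hR.le]⟩ hwc
  rcases le_or_gt 0 (w x₀) with hge | hlt
  · intro x hx
    have := hx₀min hx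
    simp only [hwdef, Set.mem_setOf_eq] at this hge ⊢
    linarith
  · exfalso
    -- x₀ is interior
    have hx₀B : x₀ ∈ ball (0:EuclideanSpace ℝ (Fin N)) R := by
      rcases lt_or_eq_of_le (mem_closedBall.mp hx₀K) with h | h
      · exact mem_ball.mpr h
      · exfalso
        have hs : x₀ ∈ sphere (0:EuclideanSpace ℝ (Fin N)) R := mem_sphere.mpr h
        obtain ⟨h1, h2⟩ := hbd x₀ hs
        simp [hwdef, h1, h2] at hlt
    have hballnhds : ball (0:EuclideanSpace ℝ (Fin N)) R ∈ nhds x₀ := isOpen_ball.mem_nhds hx₀B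
    have hlocmin : IsLocalMin w x₀ :=
      hx₀min.isLocalMin (Filter.mem_of_superset hballnhds ball_subset_closedBall)
    have hz₁at : ContDiffAt ℝ 2 z₁ x₀ := hz₁.contDiffAt hballnhds
    have hz₂at : ContDiffAt ℝ 2 z₂ x₀ := hz₂.contDiffAt hballnhds
    have hwat : ContDiffAt ℝ 2 w x₀ := hz₁at.sub hz₂at
    have d₁ : DifferentiableAt ℝ z₁ x₀ := hz₁at.differentiableAt (by norm_num)
    have d₂ : DifferentiableAt ℝ z₂ x₀ := hz₂at.differentiableAt (by norm_num)
    -- gradients agree at x₀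
    have hfd0 : fderiv ℝ w x₀ = 0 := hlocmin.fderiv_eq_zero
    have hfdsub : fderiv ℝ w x₀ = fderiv ℝ z₁ x₀ - fderiv ℝ z₂ x₀ := fderiv_sub d₁ d₂
    have hfd : fderiv ℝ z₁ x₀ = fderiv ℝ z₂ x₀ := by
      have := hfdsub.symm.trans hfd0
      exact sub_eq_zero.mp this
    have hgrad : gradient z₁ x₀ = gradient z₂ x₀ := by
      unfold gradient; rw [hfd]
    -- fderiv of w equals difference near x₀
    have hdiffball : ∀ᶠ y in nhds x₀,
        DifferentiableAt ℝ z₁ y ∧ DifferentiableAt ℝ z₂ y := by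
      filter_upwards [isOpen_ball.eventually_mem hx₀B] with y hy
      refine ⟨(hz₁.contDiffAt (isOpen_ball.mem_nhds hy)).differentiableAt (by norm_num),
        (hz₂.contDiffAt (isOpen_ball.mem_nhds hy)).differentiableAt (by norm_num)⟩
    have hfdw : (fun y => fderiv ℝ w y) =ᶠ[nhds x₀]
        fun y => fderiv ℝ z₁ y - fderiv ℝ z₂ y := by
      filter_upwards [hdiffball] with y hy
      exact fderiv_sub hy.1 hy.2
    -- differentiability of y ↦ fderiv zᵢ y
    have hF₁ : DifferentiableAt ℝ (fderiv ℝ z₁) x₀ :=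
      (hz₁at.fderiv_right (m := 1) (by norm_num)).differentiableAt (by norm_num)
    have hF₂ : DifferentiableAt ℝ (fderiv ℝ z₂) x₀ :=
      (hz₂at.fderiv_right (m := 1) (by norm_num)).differentiableAt (by norm_num)
    -- laplacian comparison
    have hlap : laplacian z₂ x₀ ≤ laplacian z₁ x₀ := by
      have key : ∀ i : Fin N,
          fderiv ℝ (fun y => fderiv ℝ z₂ y (EuclideanSpace.single i 1)) x₀
              (EuclideanSpace.single i 1)
            ≤ fderiv ℝ (fun y => fderiv ℝ z₁ y (EuclideanSpace.single i 1)) x₀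
              (EuclideanSpace.single i 1) := by
        intro i
        set e : EuclideanSpace ℝ (Fin N) := EuclideanSpace.single i 1 with he
        have hwnear : ∀ᶠ t in nhds (0:ℝ), DifferentiableAt ℝ w (x₀ + t • e) := by
          have hcont : Filter.Tendsto (fun t : ℝ => x₀ + t • e) (nhds 0) (nhds x₀) := by
            have : Continuous (fun t : ℝ => x₀ + t • e) :=
              continuous_const.add (continuous_id.smul continuous_const)
            have h0 := this.tendsto (0:ℝ)
            simpa using h0
          filter_upwards [hcont.eventually hdiffball] with t ht
          exact ht.1.sub ht.2
        have hnn : 0 ≤ fderiv ℝ (fun y => fderiv ℝ w y e) x₀ e :=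
          second_directional_nonneg hwat hlocmin hwnear
        have heq : fderiv ℝ (fun y => fderiv ℝ w y e) x₀ e
            = fderiv ℝ (fun y => fderiv ℝ z₁ y e) x₀ e
              - fderiv ℝ (fun y => fderiv ℝ z₂ y e) x₀ e := by
          have hfe : (fun y => fderiv ℝ w y e) =ᶠ[nhds x₀]
              fun y => fderiv ℝ z₁ y e - fderiv ℝ z₂ y e := by
            filter_upwards [hfdw] with y hy
            rw [hy]; rfl
          have h1e : DifferentiableAt ℝ (fun y => fderiv ℝ z₁ y e) x₀ :=
            hF₁.clm_apply (differentiableAt_const e)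
          have h2e : DifferentiableAt ℝ (fun y => fderiv ℝ z₂ y e) x₀ :=
            hF₂.clm_apply (differentiableAt_const e)
          rw [hfe.fderiv_eq, fderiv_fun_sub h1e h2e]
          rfl
        rw [heq] at hnn
        linarith
      exact Finset.sum_le_sum (fun i _ => key i)
    -- PDE arithmetic
    obtain ⟨e1, e2⟩ := hpde x₀ hx₀B
    have hz₂pos : 0 < z₂ x₀ := (hpos x₀ hx₀B).2
    rw [hσ, hgrad, hf] at e1
    have hz₁lt : z₁ x₀ < z₂ x₀ := by
      simp only [hwdef] at hlt; linarith
    have hc : 0 ≤ σ₂ ^ 2 / 2 * (laplacian z₁ x₀ - laplacian z₂ x₀) := by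
      have : (0:ℝ) ≤ σ₂ ^ 2 / 2 := by positivity
      exact mul_nonneg this (by linarith)
    nlinarith [mul_pos (sub_pos.mpr hα) hz₂pos,
      mul_pos (show (0:ℝ) < a₁ + a₂ + α₁ by linarith) (sub_pos.mpr hz₁lt)]
end

section
/- Let N be a positive integer, R > 0, a₁, a₂ > 0, α₁ = α₂ > 0, σ₁ = σ₂ > 0, and let f₁, f₂ : ℝᴺ → ℝ be continuous convex functions with 0 ≤ fᵢ(x) ≤ Mᵢ‖x‖² (i = 1, 2) and f₁(x) > f₂(x) for all x in the open ball B_R ⊂ ℝᴺ. Let (z₁, z₂) be the positive solution, twice continuously differentiable on B_R and continuous on the closed ball, of the system −a₁z₂ + (a₁+α₁)z₁ − (σ₁²/2)Δz₁ − f₁(x) = −(1/4)‖∇z₁‖² and −a₂z₁ + (a₂+α₂)z₂ − (σ₂²/2)Δz₂ − f₂(x) = −(1/4)‖∇z₂‖² on B_R with z₁ = z₂ = 0 on ∂B_R. Then z₁(x) ≥ z₂(x) for all x in the closed ball; that is, higher holding costs increase the value function. -/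
open Metric Filter Topology

private lemma aux_1d (φ φ' : ℝ → ℝ) (c : ℝ)
    (hφ : ∀ᶠ t in 𝓝 (0:ℝ), HasDerivAt φ (φ' t) t)
    (hφ' : HasDerivAt φ' c 0)
    (hmin : IsLocalMin φ 0) : 0 ≤ c := by
  by_contra hc
  push_neg at hc
  have h0 : φ' 0 = 0 := hmin.hasDerivAt_eq_zero hφ.self_of_nhds
  have hslope : Tendsto (slope φ' 0) (𝓝[≠] (0:ℝ)) (𝓝 c) :=
    hasDerivAt_iff_tendsto_slope.1 hφ'
  have hev : ∀ᶠ t in 𝓝[≠] (0:ℝ), slope φ' 0 t < 0 := hslope.eventually (gt_mem_nhds hc)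
  have hev2 : ∀ᶠ t in 𝓝[>] (0:ℝ), φ' t < 0 := by
    have hle : 𝓝[>] (0:ℝ) ≤ 𝓝[≠] (0:ℝ) :=
      nhdsWithin_mono 0 (fun t ht => ne_of_gt ht)
    filter_upwards [hle hev, self_mem_nhdsWithin] with t ht ht'
    have ht0 : (0:ℝ) < t := ht'
    have : slope φ' 0 t = φ' t / t := by
      simp [slope, h0, div_eq_inv_mul]
    rw [this] at ht
    have := mul_neg_of_neg_of_pos ht ht0
    rwa [div_mul_cancel₀ _ (ne_of_gt ht0)] at this
  have hall : ∀ᶠ t in 𝓝 (0:ℝ),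
      (HasDerivAt φ (φ' t) t ∧ φ 0 ≤ φ t) ∧ (t ∈ Set.Ioi (0:ℝ) → φ' t < 0) :=
    (hφ.and hmin).and (eventually_nhdsWithin_iff.1 hev2)
  obtain ⟨ε, hε, hball⟩ := Metric.eventually_nhds_iff_ball.1 hall
  have hmem : ∀ t : ℝ, 0 ≤ t → t ≤ ε / 2 → t ∈ ball (0:ℝ) ε := by
    intro t h1 h2
    rw [mem_ball, Real.dist_eq, sub_zero, abs_of_nonneg h1]
    linarith
  have hanti : StrictAntiOn φ (Set.Icc 0 (ε / 2)) := by
    apply strictAntiOn_of_deriv_neg (convex_Icc _ _)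
    · intro t ht
      exact ((hball t (hmem t ht.1 ht.2)).1.1).continuousAt.continuousWithinAt
    · intro t ht
      rw [interior_Icc] at ht
      have h := hball t (hmem t ht.1.le ht.2.le)
      rw [h.1.1.deriv]
      exact h.2 ht.1
  have h1 : φ (ε / 2) < φ 0 :=
    hanti ⟨le_rfl, by linarith⟩ ⟨by linarith, le_rfl⟩ (by linarith)
  have h2 : φ 0 ≤ φ (ε / 2) := (hball (ε / 2) (hmem _ (by linarith) le_rfl)).1.2
  linarith

private lemma aux_dir {N : ℕ} (w : EuclideanSpace ℝ (Fin N) → ℝ)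
    (s : Set (EuclideanSpace ℝ (Fin N))) (hs : IsOpen s) (hw : ContDiffOn ℝ 2 w s)
    (x₀ : EuclideanSpace ℝ (Fin N)) (hx₀ : x₀ ∈ s) (hmin : IsLocalMin w x₀)
    (v : EuclideanSpace ℝ (Fin N)) :
    0 ≤ fderiv ℝ (fun y => fderiv ℝ w y v) x₀ v := by
  set L : ℝ → EuclideanSpace ℝ (Fin N) := fun t => x₀ + t • v with hL
  have hline : ∀ t : ℝ, HasDerivAt L v t := by
    intro t
    have h := ((hasDerivAt_id t).smul_const v).const_add x₀
    rw [one_smul] at h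
    exact h
  have hL0 : L 0 = x₀ := by simp [hL]
  have hLev : ∀ᶠ t in 𝓝 (0:ℝ), L t ∈ s := by
    have hc : ContinuousAt L 0 := (hline 0).continuousAt
    have := hc.preimage_mem_nhds (by rw [hL0]; exact hs.mem_nhds hx₀)
    exact this
  have hφ : ∀ᶠ t in 𝓝 (0:ℝ), HasDerivAt (fun u => w (L u)) (fderiv ℝ w (L t) v) t := by
    filter_upwards [hLev] with t ht
    have hd : DifferentiableAt ℝ w (L t) :=
      (hw.contDiffAt (hs.mem_nhds ht)).differentiableAt two_ne_zero
    exact hd.hasFDerivAt.comp_hasDerivAt t (hline t)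
  have hgC : ContDiffOn ℝ 1 (fderiv ℝ w) s :=
    hw.fderiv_of_isOpen hs (by norm_num)
  have hgd : DifferentiableAt ℝ (fun y => fderiv ℝ w y v) x₀ := by
    have h1 : DifferentiableAt ℝ (fderiv ℝ w) x₀ :=
      (hgC.contDiffAt (hs.mem_nhds hx₀)).differentiableAt one_ne_zero
    exact h1.clm_apply (differentiableAt_const v)
  have hφ' : HasDerivAt (fun t => fderiv ℝ w (L t) v)
      (fderiv ℝ (fun y => fderiv ℝ w y v) x₀ v) 0 := by
    have hgd' : HasFDerivAt (fun y => fderiv ℝ w y v)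
        (fderiv ℝ (fun y => fderiv ℝ w y v) x₀) (L 0) := by
      rw [hL0]; exact hgd.hasFDerivAt
    exact hgd'.comp_hasDerivAt 0 (hline 0)
  have hminφ : IsLocalMin (fun u => w (L u)) 0 := by
    have ht : Tendsto L (𝓝 0) (𝓝 x₀) := by
      have := (hline 0).continuousAt
      rwa [ContinuousAt, hL0] at this
    exact IsMinFilter.comp_tendsto (by rwa [hL0]) ht
  exact aux_1d _ _ _ hφ hφ' hminφ


open Metric

/-- Sensitivity to holding costs: with equal discount rates and equal volatilities,
higher holding costs (`f₁ > f₂`) increase the value function: `z₁ ≥ z₂`. -/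
theorem sensitivity_holding_costs (N : ℕ) (hN : 0 < N) (R : ℝ) (hR : 0 < R)
    (a₁ a₂ α₁ α₂ σ₁ σ₂ M₁ M₂ : ℝ)
    (ha₁ : 0 < a₁) (ha₂ : 0 < a₂) (hα₁ : 0 < α₁) (hα : α₁ = α₂)
    (hσ₁ : 0 < σ₁) (hσ : σ₁ = σ₂) (hM₁ : 0 < M₁) (hM₂ : 0 < M₂)
    (f₁ f₂ : EuclideanSpace ℝ (Fin N) → ℝ)
    (hf₁c : Continuous f₁) (hf₂c : Continuous f₂)
    (hf₁cv : ConvexOn ℝ Set.univ f₁) (hf₂cv : ConvexOn ℝ Set.univ f₂)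
    (hf₁b : ∀ x, 0 ≤ f₁ x ∧ f₁ x ≤ M₁ * ‖x‖ ^ 2)
    (hf₂b : ∀ x, 0 ≤ f₂ x ∧ f₂ x ≤ M₂ * ‖x‖ ^ 2)
    (hf : ∀ x ∈ ball (0 : EuclideanSpace ℝ (Fin N)) R, f₂ x < f₁ x)
    (z₁ z₂ : EuclideanSpace ℝ (Fin N) → ℝ)
    (hz₁ : ContDiffOn ℝ 2 z₁ (ball (0 : EuclideanSpace ℝ (Fin N)) R))
    (hz₂ : ContDiffOn ℝ 2 z₂ (ball (0 : EuclideanSpace ℝ (Fin N)) R))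
    (hz₁c : ContinuousOn z₁ (closedBall (0 : EuclideanSpace ℝ (Fin N)) R))
    (hz₂c : ContinuousOn z₂ (closedBall (0 : EuclideanSpace ℝ (Fin N)) R))
    (hpos : ∀ x ∈ ball (0 : EuclideanSpace ℝ (Fin N)) R, 0 < z₁ x ∧ 0 < z₂ x)
    (hpde : ∀ x ∈ ball (0 : EuclideanSpace ℝ (Fin N)) R,
      -a₁ * z₂ x + (a₁ + α₁) * z₁ x - σ₁ ^ 2 / 2 * laplacian z₁ x - f₁ x
        = -(1 / 4) * ‖gradient z₁ x‖ ^ 2 ∧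
      -a₂ * z₁ x + (a₂ + α₂) * z₂ x - σ₂ ^ 2 / 2 * laplacian z₂ x - f₂ x
        = -(1 / 4) * ‖gradient z₂ x‖ ^ 2)
    (hbd : ∀ x ∈ sphere (0 : EuclideanSpace ℝ (Fin N)) R, z₁ x = 0 ∧ z₂ x = 0) :
    ∀ x ∈ closedBall (0 : EuclideanSpace ℝ (Fin N)) R, z₂ x ≤ z₁ x := by
  subst hα hσ
  have hE : True := trivial
  set w : EuclideanSpace ℝ (Fin N) → ℝ := fun x => z₁ x - z₂ x with hw_def
  have hwc : ContinuousOn w (closedBall (0 : EuclideanSpace ℝ (Fin N)) R) := hz₁c.sub hz₂c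
  obtain ⟨x₀, hx₀mem, hx₀min⟩ := (isCompact_closedBall (0 : EuclideanSpace ℝ (Fin N)) R).exists_isMinOn
    ⟨0, mem_closedBall_self hR.le⟩ hwc
  have key : 0 ≤ w x₀ := by
    by_contra hneg
    push_neg at hneg
    have hx₀ball : x₀ ∈ ball (0 : EuclideanSpace ℝ (Fin N)) R := by
      have hns : x₀ ∉ sphere (0 : EuclideanSpace ℝ (Fin N)) R := by
        intro hsp
        have h := hbd x₀ hsp
        rw [hw_def] at hneg
        simp only [h.1, h.2, sub_zero] at hneg
        exact absurd hneg (by norm_num)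
      rw [mem_ball]
      exact lt_of_le_of_ne (mem_closedBall.1 hx₀mem) (fun h => hns (mem_sphere.2 h))
    have hlocmin : IsLocalMin w x₀ :=
      hx₀min.isLocalMin (Filter.mem_of_superset (isOpen_ball.mem_nhds hx₀ball)
        ball_subset_closedBall)
    have hwC : ContDiffOn ℝ 2 w (ball (0 : EuclideanSpace ℝ (Fin N)) R) := hz₁.sub hz₂
    have hd1 : ∀ y ∈ ball (0 : EuclideanSpace ℝ (Fin N)) R, DifferentiableAt ℝ z₁ y := fun y hy =>
      (hz₁.contDiffAt (isOpen_ball.mem_nhds hy)).differentiableAt two_ne_zero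
    have hd2 : ∀ y ∈ ball (0 : EuclideanSpace ℝ (Fin N)) R, DifferentiableAt ℝ z₂ y := fun y hy =>
      (hz₂.contDiffAt (isOpen_ball.mem_nhds hy)).differentiableAt two_ne_zero
    have hfsub : ∀ y ∈ ball (0 : EuclideanSpace ℝ (Fin N)) R, fderiv ℝ w y = fderiv ℝ z₁ y - fderiv ℝ z₂ y :=
      fun y hy => fderiv_sub (hd1 y hy) (hd2 y hy)
    have hfw : fderiv ℝ w x₀ = 0 := hlocmin.fderiv_eq_zero
    have hgrad : fderiv ℝ z₁ x₀ = fderiv ℝ z₂ x₀ := by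
      have h := hfsub x₀ hx₀ball
      rw [hfw] at h
      exact (sub_eq_zero.1 h.symm)
    have hg : gradient z₁ x₀ = gradient z₂ x₀ := by
      simp only [gradient, hgrad]
    -- laplacian decomposition
    have hterm : ∀ i : Fin N,
        fderiv ℝ (fun y => fderiv ℝ z₁ y (EuclideanSpace.single i 1)) x₀
            (EuclideanSpace.single i 1)
          - fderiv ℝ (fun y => fderiv ℝ z₂ y (EuclideanSpace.single i 1)) x₀
            (EuclideanSpace.single i 1)
        = fderiv ℝ (fun y => fderiv ℝ w y (EuclideanSpace.single i 1)) x₀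
            (EuclideanSpace.single i 1) := by
      intro i
      set e : EuclideanSpace ℝ (Fin N) := EuclideanSpace.single i (1:ℝ) with he
      have heq : (fun y => fderiv ℝ w y e)
          =ᶠ[nhds x₀] fun y => fderiv ℝ z₁ y e - fderiv ℝ z₂ y e := by
        filter_upwards [isOpen_ball.mem_nhds hx₀ball] with y hy
        rw [hfsub y hy]
        rfl
      have hgd1 : DifferentiableAt ℝ (fun y => fderiv ℝ z₁ y e) x₀ := by
        have h1 : DifferentiableAt ℝ (fderiv ℝ z₁) x₀ :=
          ((hz₁.fderiv_of_isOpen (m := 1) isOpen_ball (by norm_num)).contDiffAt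
            (isOpen_ball.mem_nhds hx₀ball)).differentiableAt
            one_ne_zero
        exact h1.clm_apply (differentiableAt_const e)
      have hgd2 : DifferentiableAt ℝ (fun y => fderiv ℝ z₂ y e) x₀ := by
        have h1 : DifferentiableAt ℝ (fderiv ℝ z₂) x₀ :=
          ((hz₂.fderiv_of_isOpen (m := 1) isOpen_ball (by norm_num)).contDiffAt
            (isOpen_ball.mem_nhds hx₀ball)).differentiableAt
            one_ne_zero
        exact h1.clm_apply (differentiableAt_const e)
      rw [heq.fderiv_eq, fderiv_fun_sub hgd1 hgd2]
      rfl
    have hlap : laplacian z₁ x₀ - laplacian z₂ x₀ = laplacian w x₀ := by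
      simp only [laplacian, ← Finset.sum_sub_distrib]
      exact Finset.sum_congr rfl fun i _ => hterm i
    have hlapnn : 0 ≤ laplacian w x₀ := by
      unfold laplacian
      exact Finset.sum_nonneg fun i _ =>
        aux_dir w _ isOpen_ball hwC x₀ hx₀ball hlocmin _
    obtain ⟨h1, h2⟩ := hpde x₀ hx₀ball
    have hG : ‖gradient z₁ x₀‖ ^ 2 = ‖gradient z₂ x₀‖ ^ 2 := by rw [hg]
    have hsum : (a₁ + a₂ + α₁) * (z₁ x₀ - z₂ x₀)
        = (f₁ x₀ - f₂ x₀) + σ₁ ^ 2 / 2 * (laplacian z₁ x₀ - laplacian z₂ x₀) := by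
      linear_combination h1 - h2 - (1/4) * hG
    have hposrhs : 0 < (f₁ x₀ - f₂ x₀)
        + σ₁ ^ 2 / 2 * (laplacian z₁ x₀ - laplacian z₂ x₀) := by
      have h3 : 0 < f₁ x₀ - f₂ x₀ := sub_pos.2 (hf x₀ hx₀ball)
      have h4 : 0 ≤ σ₁ ^ 2 / 2 * (laplacian z₁ x₀ - laplacian z₂ x₀) := by
        rw [hlap]
        exact mul_nonneg (by positivity) hlapnn
      linarith
    have hneglhs : (a₁ + a₂ + α₁) * (z₁ x₀ - z₂ x₀) < 0 :=
      mul_neg_of_pos_of_neg (by linarith) hneg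
    rw [hsum] at hneglhs
    linarith
  intro x hx
  have := hx₀min hx
  have hwx : w x₀ ≤ w x := this
  rw [hw_def] at key hwx
  simp only at key hwx
  linarith
end
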